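/- arXiv:2103.01208 — 11 statements merged into one kernel-verified Lean document; each statement's English description precedes it below -/
import Mathlib

section
/- Let d ≥ 1, x ∈ [0,1]^d, ε > 0 and u ∈ ℝ^d. For i = 1,…,d set γ_i = max{−x_i·sign(u_i−x_i), (1−x_i)·sign(u_i−x_i)}, and for λ ≥ 0 set φ(λ) = ∑_{i=1}^d max{0, min{|u_i−x_i| − λ, γ_i}} and z(λ)_i = x_i + sign(u_i−x_i)·max{0, min{|u_i−x_i| − λ, γ_i}}. If λ* ≥ 0 satisfies either (λ* = 0 and φ(0) ≤ ε) or φ(λ*) = ε, then z(λ*) ∈ S = B₁(x,ε) ∩ [0,1]^d and ‖u − z(λ*)‖₂ ≤ ‖u − z‖₂ for every z ∈ S, i.e. z(λ*) = P_S(u). -/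
/-- Key scalar inequality used per coordinate in the optimality proof. -/
lemma key_ineq_aux (a g lam w b : ℝ) (ha : 0 ≤ a) (hlam : 0 ≤ lam) (hg : 0 ≤ g)
    (hw1 : w ≤ g) (hw2 : w ≤ b) (hb : 0 ≤ b) :
    (a - max 0 (min (a - lam) g)) * (w - max 0 (min (a - lam) g))
      ≤ lam * (b - max 0 (min (a - lam) g)) := by
  rcases le_total (min (a - lam) g) 0 with h | h
  · rw [max_eq_left h]
    rcases le_total (a - lam) g with h2 | h2
    · rw [min_eq_left h2] at h
      rcases le_total w 0 with hw | hw
      · nlinarith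
      · nlinarith
    · rw [min_eq_right h2] at h
      nlinarith
  · rw [max_eq_right h]
    rcases le_total (a - lam) g with h2 | h2
    · rw [min_eq_left h2]
      nlinarith
    · rw [min_eq_right h2]
      rw [min_eq_right h2] at h
      nlinarith

/-- Per-coordinate facts: distance to x, and box membership. -/
lemma coord_facts (xi ui g lam : ℝ) (hx0 : 0 ≤ xi) (hx1 : xi ≤ 1) (hlam : 0 ≤ lam)
    (hg : g = max (-xi * Real.sign (ui - xi)) ((1 - xi) * Real.sign (ui - xi))) :
    |xi + Real.sign (ui - xi) * max 0 (min (|ui - xi| - lam) g) - xi|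
        = max 0 (min (|ui - xi| - lam) g) ∧
      0 ≤ xi + Real.sign (ui - xi) * max 0 (min (|ui - xi| - lam) g) ∧
      xi + Real.sign (ui - xi) * max 0 (min (|ui - xi| - lam) g) ≤ 1 := by
  rcases lt_trichotomy (ui - xi) 0 with h | h | h
  · rw [Real.sign_of_neg h] at hg ⊢
    have hgx : g = xi := by rw [hg]; rw [max_eq_left (by linarith)]; ring_nf
    set t := max 0 (min (|ui - xi| - lam) g) with ht
    have ht0 : 0 ≤ t := le_max_left _ _
    have htg : t ≤ g := max_le (by linarith [hgx]) (min_le_right _ _)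
    refine ⟨?_, by nlinarith [hgx], by nlinarith⟩
    rw [abs_of_nonpos (by nlinarith)]; ring
  · have h0 : ui - xi = 0 := h
    rw [h0, Real.sign_zero] at hg ⊢
    have hmin : min (|(0:ℝ)| - lam) g ≤ 0 := le_trans (min_le_left _ _) (by simp [hlam])
    rw [max_eq_left hmin]
    refine ⟨by simp, by simpa using hx0, by simpa using hx1⟩
  · rw [Real.sign_of_pos h] at hg ⊢
    have hgx : g = 1 - xi := by rw [hg]; rw [max_eq_right (by linarith)]; ring_nf
    set t := max 0 (min (|ui - xi| - lam) g) with ht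
    have ht0 : 0 ≤ t := le_max_left _ _
    have htg : t ≤ g := max_le (by linarith [hgx]) (min_le_right _ _)
    refine ⟨?_, by nlinarith, by nlinarith [hgx]⟩
    rw [abs_of_nonneg (by nlinarith)]; ring

/-- Per-coordinate optimality inequality. -/
lemma coord_opt (xi ui g lam vi : ℝ) (hx0 : 0 ≤ xi) (hx1 : xi ≤ 1) (hlam : 0 ≤ lam)
    (hg : g = max (-xi * Real.sign (ui - xi)) ((1 - xi) * Real.sign (ui - xi)))
    (hv0 : 0 ≤ vi) (hv1 : vi ≤ 1) :
    (ui - (xi + Real.sign (ui - xi) * max 0 (min (|ui - xi| - lam) g)))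
        * (vi - (xi + Real.sign (ui - xi) * max 0 (min (|ui - xi| - lam) g)))
      ≤ lam * (|vi - xi| - max 0 (min (|ui - xi| - lam) g)) := by
  rcases lt_trichotomy (ui - xi) 0 with h | h | h
  · rw [Real.sign_of_neg h] at hg ⊢
    have hgx : g = xi := by rw [hg]; rw [max_eq_left (by linarith)]; ring_nf
    have ha : |ui - xi| = xi - ui := by rw [abs_of_neg h]; ring
    rw [ha] at *
    have key := key_ineq_aux (xi - ui) g lam (xi - vi) |vi - xi|
      (by linarith) hlam (by linarith [hgx]) (by linarith [hgx])
      (by rw [abs_sub_comm]; exact le_abs_self _) (abs_nonneg _)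
    set t := max 0 (min (xi - ui - lam) g) with htdef
    nlinarith [key]
  · have h0 : ui - xi = 0 := h
    rw [h0, Real.sign_zero]
    have hmin : min (|(0:ℝ)| - lam) g ≤ 0 := le_trans (min_le_left _ _) (by simp [hlam])
    rw [max_eq_left hmin]
    have : ui = xi := by linarith
    simp [this]
    positivity
  · rw [Real.sign_of_pos h] at hg ⊢
    have hgx : g = 1 - xi := by rw [hg]; rw [max_eq_right (by linarith)]; ring_nf
    have ha : |ui - xi| = ui - xi := abs_of_pos h
    rw [ha] at *
    have key := key_ineq_aux (ui - xi) g lam (vi - xi) |vi - xi|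
      (by linarith) hlam (by linarith [hgx]) (by linarith [hgx])
      (le_abs_self _) (abs_nonneg _)
    set t := max 0 (min (ui - xi - lam) g) with htdef
    nlinarith [key]

/-- Proposition 1 of the paper: the closed-form expression `z(λ*)` is the exact Euclidean
projection of `u` onto `S = B₁(x,ε) ∩ [0,1]^d`. -/
theorem exact_projection_onto_l1_ball_inter_box
    (d : ℕ) (hd : 1 ≤ d) (x u : Fin d → ℝ)
    (hx : ∀ i, x i ∈ Set.Icc (0:ℝ) 1) (ε : ℝ) (hε : 0 < ε)
    (γ : Fin d → ℝ)
    (hγ : ∀ i, γ i = max (-(x i) * Real.sign (u i - x i)) ((1 - x i) * Real.sign (u i - x i)))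
    (φ : ℝ → ℝ)
    (hφ : ∀ lam, φ lam = ∑ i, max 0 (min (|u i - x i| - lam) (γ i)))
    (z : ℝ → Fin d → ℝ)
    (hz : ∀ lam i, z lam i = x i + Real.sign (u i - x i) * max 0 (min (|u i - x i| - lam) (γ i)))
    (lam : ℝ) (hlam : 0 ≤ lam)
    (hopt : (lam = 0 ∧ φ 0 ≤ ε) ∨ φ lam = ε) :
    (∑ i, |z lam i - x i| ≤ ε ∧ ∀ i, z lam i ∈ Set.Icc (0:ℝ) 1) ∧
      ∀ v : Fin d → ℝ, (∑ i, |v i - x i| ≤ ε ∧ ∀ i, v i ∈ Set.Icc (0:ℝ) 1) →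
        Real.sqrt (∑ i, (u i - z lam i)^2) ≤ Real.sqrt (∑ i, (u i - v i)^2) := by
  have hfacts : ∀ i, |z lam i - x i| = max 0 (min (|u i - x i| - lam) (γ i)) ∧
      0 ≤ z lam i ∧ z lam i ≤ 1 := by
    intro i
    rw [hz lam i]
    exact coord_facts (x i) (u i) (γ i) lam (hx i).1 (hx i).2 hlam (hγ i)
  have hsumz : ∑ i, |z lam i - x i| = φ lam := by
    rw [hφ lam]
    exact Finset.sum_congr rfl (fun i _ => (hfacts i).1)
  have hφε : φ lam ≤ ε := by
    rcases hopt with ⟨h0, hle⟩ | heq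
    · rw [h0]; exact hle
    · exact le_of_eq heq
  refine ⟨⟨by rw [hsumz]; exact hφε, fun i => ⟨(hfacts i).2.1, (hfacts i).2.2⟩⟩, ?_⟩
  intro v ⟨hv1, hv2⟩
  -- inner product inequality
  have hcoord : ∀ i, (u i - z lam i) * (v i - z lam i)
      ≤ lam * (|v i - x i| - max 0 (min (|u i - x i| - lam) (γ i))) := by
    intro i
    rw [hz lam i]
    exact coord_opt (x i) (u i) (γ i) lam (v i) (hx i).1 (hx i).2 hlam (hγ i)
      (hv2 i).1 (hv2 i).2
  have hsum : ∑ i, (u i - z lam i) * (v i - z lam i) ≤ lam * (∑ i, |v i - x i| - φ lam) := by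
    calc ∑ i, (u i - z lam i) * (v i - z lam i)
        ≤ ∑ i, lam * (|v i - x i| - max 0 (min (|u i - x i| - lam) (γ i))) :=
          Finset.sum_le_sum (fun i _ => hcoord i)
      _ = lam * (∑ i, |v i - x i| - φ lam) := by
          rw [← Finset.mul_sum, hφ lam, Finset.sum_sub_distrib]
  have hsum0 : ∑ i, (u i - z lam i) * (v i - z lam i) ≤ 0 := by
    rcases hopt with ⟨h0, _⟩ | heq
    · rw [h0] at hsum ⊢; simpa using hsum
    · have : lam * (∑ i, |v i - x i| - φ lam) ≤ 0 := by
        apply mul_nonpos_of_nonneg_of_nonpos hlam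
        rw [heq]; linarith
      linarith
  have hexpand : ∑ i, (u i - v i)^2
      = ∑ i, (u i - z lam i)^2 + ∑ i, (v i - z lam i)^2
        - 2 * ∑ i, (u i - z lam i) * (v i - z lam i) := by
    have hterm : ∀ i : Fin d, (u i - v i)^2
        = (u i - z lam i)^2 + (v i - z lam i)^2
          - 2 * ((u i - z lam i) * (v i - z lam i)) := fun i => by ring
    rw [Finset.sum_congr rfl (fun i _ => hterm i), Finset.sum_sub_distrib,
      Finset.sum_add_distrib, ← Finset.mul_sum]
  have hsq : ∑ i, (u i - z lam i)^2 ≤ ∑ i, (u i - v i)^2 := by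
    have hnn : 0 ≤ ∑ i, (v i - z lam i)^2 :=
      Finset.sum_nonneg (fun i _ => sq_nonneg _)
    linarith [hexpand, hsum0, hnn]
  exact Real.sqrt_le_sqrt hsq
end

section
/- Let d ≥ 1, x ∈ [0,1]^d, ε > 0 and u ∈ ℝ^d. Then A(u) = P_H(P_{B₁(x,ε)}(u)) belongs to S, i.e. A(u) ∈ [0,1]^d and ‖A(u) − x‖₁ ≤ ε. -/
/-- The approximate projection `A(u) = P_H(P_{B₁(x,ε)}(u))` lies in `S = B₁(x,ε) ∩ [0,1]^d`.
Here `p` is characterized as the Euclidean projection of `u` onto the `l1`-ball `B₁(x,ε)`. -/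
theorem approx_projection_mem_inter
    (d : ℕ) (hd : 1 ≤ d) (x u : Fin d → ℝ)
    (hx : ∀ i, x i ∈ Set.Icc (0:ℝ) 1) (ε : ℝ) (hε : 0 < ε)
    (p : Fin d → ℝ)
    (hp1 : ∑ i, |p i - x i| ≤ ε)
    (hp2 : ∀ v : Fin d → ℝ, ∑ i, |v i - x i| ≤ ε →
      Real.sqrt (∑ i, (u i - p i)^2) ≤ Real.sqrt (∑ i, (u i - v i)^2)) :
    (∀ i, max 0 (min (p i) 1) ∈ Set.Icc (0:ℝ) 1) ∧
      ∑ i, |max 0 (min (p i) 1) - x i| ≤ ε := by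
  constructor
  · intro i
    constructor
    · exact le_max_left _ _
    · exact max_le (by norm_num) (min_le_right _ _)
  · refine le_trans (Finset.sum_le_sum fun i _ => ?_) hp1
    obtain ⟨hx0, hx1⟩ := hx i
    rcases le_total (p i) 0 with h | h
    · rw [min_eq_left (h.trans (by norm_num)), max_eq_left h]
      rw [abs_of_nonpos (by linarith), abs_of_nonpos (by linarith)]
      linarith
    · rw [max_eq_right (le_min h (by norm_num))]
      rcases le_total (p i) 1 with h1 | h1
      · rw [min_eq_left h1]
      · rw [min_eq_right h1, abs_of_nonneg (by linarith), abs_of_nonneg (by linarith)]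
        linarith
end

section
/- Let d ≥ 1, x ∈ [0,1]^d, ε > 0. For every u ∈ ℝ^d it holds that ‖P_S(u) − x‖₁ ≥ ‖A(u) − x‖₁. -/
open Finset

private lemma clamp_dist_le (y z lo hi : ℝ) (h1 : lo ≤ z) (h2 : z ≤ hi) :
    |max lo (min y hi) - z| ≤ |y - z| := by
  rcases le_total y lo with h | h
  · rw [min_eq_left (h.trans (h1.trans h2)), max_eq_left h,
      abs_of_nonpos (by linarith), abs_of_nonpos (by linarith)]
    linarith
  · rcases le_total y hi with h' | h'
    · rw [min_eq_left h', max_eq_right h]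
    · rw [min_eq_right h', max_eq_right (h1.trans h2),
        abs_of_nonneg (by linarith), abs_of_nonneg (by linarith)]
      linarith

private lemma clamp_dist_lt (y z lo hi : ℝ) (h1 : lo ≤ z) (h2 : z ≤ hi)
    (hy : y < lo ∨ hi < y) :
    |max lo (min y hi) - z| < |y - z| := by
  rcases hy with h | h
  · rw [min_eq_left (by linarith), max_eq_left (by linarith),
      abs_of_nonpos (by linarith), abs_of_nonpos (by linarith)]
    linarith
  · rw [min_eq_right (by linarith), max_eq_right (h1.trans h2),
      abs_of_nonneg (by linarith), abs_of_nonneg (by linarith)]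
    linarith

private lemma proj01_dist_lt (y z : ℝ) (hz0 : 0 ≤ z) (hz1 : z ≤ 1)
    (hne : z ≠ max 0 (min y 1)) :
    |y - max 0 (min y 1)| < |y - z| := by
  rcases le_total y 0 with h | h
  · rw [min_eq_left (by linarith), max_eq_left h] at hne ⊢
    have hz : 0 < z := lt_of_le_of_ne hz0 (Ne.symm hne)
    rw [abs_of_nonpos (by linarith), abs_of_nonpos (by linarith)]
    linarith
  · rcases le_total y 1 with h' | h'
    · rw [min_eq_left h', max_eq_right h] at hne ⊢
      simp only [sub_self, abs_zero]
      exact abs_pos.mpr (sub_ne_zero.mpr (fun hyz => hne hyz.symm))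
    · rw [min_eq_right h', max_eq_right zero_le_one] at hne ⊢
      have hz : z < 1 := lt_of_le_of_ne hz1 hne
      rw [abs_of_nonneg (by linarith), abs_of_nonneg (by linarith)]
      linarith

private lemma clamp_between (xi ui pi : ℝ) (hx0 : 0 ≤ xi) (hx1 : xi ≤ 1)
    (h1 : min xi ui ≤ pi) (h2 : pi ≤ max xi ui) :
    |max 0 (min pi 1) - xi| ≤ |max 0 (min ui 1) - xi| := by
  have mono : ∀ a b : ℝ, a ≤ b → max 0 (min a 1) ≤ max 0 (min b 1) := by
    intro a b hab
    exact max_le_max le_rfl (min_le_min hab le_rfl)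
  have hxc : max 0 (min xi 1) = xi := by rw [min_eq_left hx1, max_eq_right hx0]
  rcases le_total xi ui with h | h
  · have hpl : xi ≤ pi := by rw [min_eq_left h] at h1; exact h1
    have hpu : pi ≤ ui := by rw [max_eq_right h] at h2; exact h2
    have c1 : xi ≤ max 0 (min pi 1) := by rw [← hxc]; exact mono _ _ hpl
    have c2 : max 0 (min pi 1) ≤ max 0 (min ui 1) := mono _ _ hpu
    rw [abs_of_nonneg (by linarith), abs_of_nonneg (by linarith)]
    linarith
  · have hpl : ui ≤ pi := by rw [min_eq_right h] at h1; exact h1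
    have hpu : pi ≤ xi := by rw [max_eq_left h] at h2; exact h2
    have c1 : max 0 (min pi 1) ≤ xi := by rw [← hxc]; exact mono _ _ hpu
    have c2 : max 0 (min ui 1) ≤ max 0 (min pi 1) := mono _ _ hpl
    rw [abs_of_nonpos (by linarith), abs_of_nonpos (by linarith)]
    linarith

/-- First part of Lemma 2 of the paper: the exact projection `P_S(u)` onto
`S = B₁(x,ε) ∩ [0,1]^d` is at least as far from `x` in `l1`-distance as the approximate
projection `A(u) = P_H(P_{B₁(x,ε)}(u))`. Here `p` is the Euclidean projection of `u` onto the
`l1`-ball and `q` is the Euclidean projection of `u` onto `S`. -/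
theorem exact_projection_l1_dist_ge_approx
    (d : ℕ) (hd : 1 ≤ d) (x u : Fin d → ℝ)
    (hx : ∀ i, x i ∈ Set.Icc (0:ℝ) 1) (ε : ℝ) (hε : 0 < ε)
    (p : Fin d → ℝ)
    (hp1 : ∑ i, |p i - x i| ≤ ε)
    (hp2 : ∀ v : Fin d → ℝ, ∑ i, |v i - x i| ≤ ε →
      Real.sqrt (∑ i, (u i - p i)^2) ≤ Real.sqrt (∑ i, (u i - v i)^2))
    (q : Fin d → ℝ)
    (hq1 : ∑ i, |q i - x i| ≤ ε ∧ ∀ i, q i ∈ Set.Icc (0:ℝ) 1)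
    (hq2 : ∀ v : Fin d → ℝ, (∑ i, |v i - x i| ≤ ε ∧ ∀ i, v i ∈ Set.Icc (0:ℝ) 1) →
      Real.sqrt (∑ i, (u i - q i)^2) ≤ Real.sqrt (∑ i, (u i - v i)^2)) :
    ∑ i, |max 0 (min (p i) 1) - x i| ≤ ∑ i, |q i - x i| := by
  classical
  obtain ⟨hq1a, hq1b⟩ := hq1
  -- sum splitting helper
  have sum_split : ∀ (i : Fin d) (f : Fin d → ℝ),
      ∑ j, f j = f i + ∑ j ∈ univ.erase i, f j := by
    intro i f
    exact (Finset.add_sum_erase univ f (mem_univ i)).symm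
  -- the clipped point is pointwise closer to x than p
  have hA_le_p : ∀ i, |max 0 (min (p i) 1) - x i| ≤ |p i - x i| := fun i =>
    clamp_dist_le (p i) (x i) 0 1 (hx i).1 (hx i).2
  have hAsum : ∑ i, |max 0 (min (p i) 1) - x i| ≤ ε :=
    le_trans (Finset.sum_le_sum fun i _ => hA_le_p i) hp1
  -- betweenness: p i lies between x i and u i
  have hbet : ∀ i, min (x i) (u i) ≤ p i ∧ p i ≤ max (x i) (u i) := by
    intro i
    by_contra hc
    push_neg at hc
    have hy : p i < min (x i) (u i) ∨ max (x i) (u i) < p i := by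
      rcases le_or_gt (min (x i) (u i)) (p i) with h | h
      · exact Or.inr (hc h)
      · exact Or.inl h
    set lo := min (x i) (u i) with hlo
    set hi := max (x i) (u i) with hhi
    set b := max lo (min (p i) hi) with hb
    set v : Fin d → ℝ := fun j => if j = i then b else p j with hv
    have hvfeas : ∑ j, |v j - x j| ≤ ε := by
      have hbx : |b - x i| ≤ |p i - x i| :=
        clamp_dist_le (p i) (x i) lo hi (min_le_left _ _) (le_max_left _ _)
      have e1 : ∑ j, |v j - x j| = |b - x i| + ∑ j ∈ univ.erase i, |p j - x j| := by
        rw [sum_split i]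
        congr 1
        · simp [hv]
        · apply Finset.sum_congr rfl
          intro j hj
          have : j ≠ i := (Finset.mem_erase.mp hj).1
          simp [hv, this]
      have e2 : ∑ j, |p j - x j| = |p i - x i| + ∑ j ∈ univ.erase i, |p j - x j| :=
        sum_split i _
      linarith
    have hbu : |b - u i| < |p i - u i| :=
      clamp_dist_lt (p i) (u i) lo hi (min_le_right _ _) (le_max_right _ _) hy
    have hsq : (u i - b)^2 < (u i - p i)^2 := by
      have h1 : |b - u i|^2 < |p i - u i|^2 :=
        pow_lt_pow_left₀ hbu (abs_nonneg _) (two_ne_zero)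
      calc (u i - b)^2 = |b - u i|^2 := by rw [sq_abs]; ring
        _ < |p i - u i|^2 := h1
        _ = (u i - p i)^2 := by rw [sq_abs]; ring
    have hlt : ∑ j, (u j - v j)^2 < ∑ j, (u j - p j)^2 := by
      have e1 : ∑ j, (u j - v j)^2 = (u i - b)^2 + ∑ j ∈ univ.erase i, (u j - p j)^2 := by
        rw [sum_split i]
        congr 1
        · simp [hv]
        · apply Finset.sum_congr rfl
          intro j hj
          have : j ≠ i := (Finset.mem_erase.mp hj).1
          simp [hv, this]
      have e2 : ∑ j, (u j - p j)^2 = (u i - p i)^2 + ∑ j ∈ univ.erase i, (u j - p j)^2 :=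
        sum_split i _
      linarith
    have hsqrt : Real.sqrt (∑ j, (u j - v j)^2) < Real.sqrt (∑ j, (u j - p j)^2) :=
      Real.sqrt_lt_sqrt (Finset.sum_nonneg fun j _ => sq_nonneg _) hlt
    have := hp2 v hvfeas
    linarith
  -- main contradiction
  by_contra hmain
  push_neg at hmain
  have hqε : ∑ j, |q j - x j| < ε := lt_of_lt_of_le hmain hAsum
  have hqc : ∀ i, q i = max 0 (min (u i) 1) := by
    intro i
    by_contra hne
    set ci := max 0 (min (u i) 1) with hci
    have hci0 : (0:ℝ) ≤ ci := le_max_left _ _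
    have hci1 : ci ≤ 1 := max_le zero_le_one (min_le_right _ _)
    have hdp : 0 < |ci - q i| := abs_pos.mpr (sub_ne_zero.mpr (fun h => hne h.symm))
    set δ := ε - ∑ j, |q j - x j| with hδ
    have hδpos : 0 < δ := by simp only [hδ]; linarith
    set t := min 1 (δ / |ci - q i|) with ht
    have ht0 : 0 < t := lt_min one_pos (div_pos hδpos hdp)
    have ht1 : t ≤ 1 := min_le_left _ _
    have htδ : t * |ci - q i| ≤ δ := by
      have h1 : t ≤ δ / |ci - q i| := min_le_right _ _
      calc t * |ci - q i| ≤ (δ / |ci - q i|) * |ci - q i| :=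
            mul_le_mul_of_nonneg_right h1 hdp.le
        _ = δ := div_mul_cancel₀ _ hdp.ne'
    set b := q i + t * (ci - q i) with hb
    set v : Fin d → ℝ := fun j => if j = i then b else q j with hv
    have hqi0 : (0:ℝ) ≤ q i := (hq1b i).1
    have hqi1 : q i ≤ 1 := (hq1b i).2
    have hvH : ∀ j, v j ∈ Set.Icc (0:ℝ) 1 := by
      intro j
      by_cases hj : j = i
      · simp only [hv, hj, if_pos]
        constructor
        · nlinarith
        · nlinarith
      · simp only [hv, hj, if_neg, if_false]
        exact hq1b j
    have hvfeas : ∑ j, |v j - x j| ≤ ε := by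
      have hbx : |b - x i| ≤ |q i - x i| + δ := by
        have : b - x i = (q i - x i) + t * (ci - q i) := by ring
        rw [this]
        calc |(q i - x i) + t * (ci - q i)| ≤ |q i - x i| + |t * (ci - q i)| := abs_add_le _ _
          _ = |q i - x i| + t * |ci - q i| := by rw [abs_mul, abs_of_pos ht0]
          _ ≤ |q i - x i| + δ := by linarith
      have e1 : ∑ j, |v j - x j| = |b - x i| + ∑ j ∈ univ.erase i, |q j - x j| := by
        rw [sum_split i]
        congr 1
        · simp [hv]
        · apply Finset.sum_congr rfl
          intro j hj
          have : j ≠ i := (Finset.mem_erase.mp hj).1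
          simp [hv, this]
      have e2 : ∑ j, |q j - x j| = |q i - x i| + ∑ j ∈ univ.erase i, |q j - x j| :=
        sum_split i _
      have : δ = ε - ∑ j, |q j - x j| := hδ
      linarith
    have hproj : |u i - ci| < |u i - q i| :=
      proj01_dist_lt (u i) (q i) hqi0 hqi1 hne
    have hub : |u i - b| < |u i - q i| := by
      have heq : u i - b = (1 - t) * (u i - q i) + t * (u i - ci) := by
        simp only [hb]; ring
      rw [heq]
      calc |(1 - t) * (u i - q i) + t * (u i - ci)|
          ≤ |(1 - t) * (u i - q i)| + |t * (u i - ci)| := abs_add_le _ _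
        _ = (1 - t) * |u i - q i| + t * |u i - ci| := by
            rw [abs_mul, abs_mul, abs_of_nonneg (by linarith : (0:ℝ) ≤ 1 - t),
              abs_of_pos ht0]
        _ < (1 - t) * |u i - q i| + t * |u i - q i| := by nlinarith
        _ = |u i - q i| := by ring
    have hsq : (u i - b)^2 < (u i - q i)^2 := by
      have := pow_lt_pow_left₀ hub (abs_nonneg _) (two_ne_zero)
      simpa [sq_abs] using this
    have hlt : ∑ j, (u j - v j)^2 < ∑ j, (u j - q j)^2 := by
      have e1 : ∑ j, (u j - v j)^2 = (u i - b)^2 + ∑ j ∈ univ.erase i, (u j - q j)^2 := by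
        rw [sum_split i]
        congr 1
        · simp [hv]
        · apply Finset.sum_congr rfl
          intro j hj
          have : j ≠ i := (Finset.mem_erase.mp hj).1
          simp [hv, this]
      have e2 : ∑ j, (u j - q j)^2 = (u i - q i)^2 + ∑ j ∈ univ.erase i, (u j - q j)^2 :=
        sum_split i _
      linarith
    have hsqrt : Real.sqrt (∑ j, (u j - v j)^2) < Real.sqrt (∑ j, (u j - q j)^2) :=
      Real.sqrt_lt_sqrt (Finset.sum_nonneg fun j _ => sq_nonneg _) hlt
    have := hq2 v ⟨hvfeas, hvH⟩
    linarith
  have hfinal : ∑ i, |max 0 (min (p i) 1) - x i| ≤ ∑ i, |q i - x i| := by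
    apply Finset.sum_le_sum
    intro i _
    rw [hqc i]
    exact clamp_between (x i) (u i) (p i) (hx i).1 (hx i).2 (hbet i).1 (hbet i).2
  linarith
end

section
/- Let d ≥ 1, x ∈ [0,1]^d, ε > 0 and u ∈ ℝ^d. Suppose that P_{B₁(x,ε)}(u) ∉ [0,1]^d, that ‖u − x‖₁ > ε, and that ‖P_S(u) − x‖₁ = ε. Then the inequality is strict: ‖P_S(u) − x‖₁ > ‖A(u) − x‖₁. -/
lemma clip_abs_le (a t : ℝ) (ha : 0 ≤ a) (ha1 : a ≤ 1) :
    |max 0 (min t 1) - a| ≤ |t - a| := by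
  rcases le_total t 0 with h | h
  · rw [min_eq_left (h.trans one_pos.le), max_eq_left h]
    rw [abs_of_nonpos (by linarith), abs_of_nonpos (by linarith)]
    linarith
  · rcases le_total t 1 with h1 | h1
    · rw [min_eq_left h1, max_eq_right h]
    · rw [min_eq_right h1, max_eq_right zero_le_one]
      rw [abs_of_nonneg (by linarith), abs_of_nonneg (by linarith)]
      linarith

lemma clip_abs_lt (a t : ℝ) (ha : 0 ≤ a) (ha1 : a ≤ 1)
    (ht : ¬ t ∈ Set.Icc (0:ℝ) 1) :
    |max 0 (min t 1) - a| < |t - a| := by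
  rw [Set.mem_Icc, not_and_or, not_le, not_le] at ht
  rcases ht with h | h
  · rw [min_eq_left (by linarith), max_eq_left h.le]
    rw [abs_of_nonpos (by linarith), abs_of_nonpos (by linarith)]
    linarith
  · rw [min_eq_right h.le, max_eq_right zero_le_one]
    rw [abs_of_nonneg (by linarith), abs_of_nonneg (by linarith)]
    linarith

/-- Strict-inequality case of Lemma 2 of the paper when the exact projection lies on the
boundary of the `l1`-ball: if `P_{B₁(x,ε)}(u) ∉ [0,1]^d`, `‖u−x‖₁ > ε` and
`‖P_S(u)−x‖₁ = ε`, then `‖P_S(u)−x‖₁ > ‖A(u)−x‖₁`. Here `p` is the Euclidean projection of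
`u` onto the `l1`-ball `B₁(x,ε)` and `q` the Euclidean projection of `u` onto
`S = B₁(x,ε) ∩ [0,1]^d`. -/
theorem exact_projection_l1_dist_gt_approx_boundary
    (d : ℕ) (hd : 1 ≤ d) (x u : Fin d → ℝ)
    (hx : ∀ i, x i ∈ Set.Icc (0:ℝ) 1) (ε : ℝ) (hε : 0 < ε)
    (p : Fin d → ℝ)
    (hp1 : ∑ i, |p i - x i| ≤ ε)
    (hp2 : ∀ v : Fin d → ℝ, ∑ i, |v i - x i| ≤ ε →
      Real.sqrt (∑ i, (u i - p i)^2) ≤ Real.sqrt (∑ i, (u i - v i)^2))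
    (q : Fin d → ℝ)
    (hq1 : ∑ i, |q i - x i| ≤ ε ∧ ∀ i, q i ∈ Set.Icc (0:ℝ) 1)
    (hq2 : ∀ v : Fin d → ℝ, (∑ i, |v i - x i| ≤ ε ∧ ∀ i, v i ∈ Set.Icc (0:ℝ) 1) →
      Real.sqrt (∑ i, (u i - q i)^2) ≤ Real.sqrt (∑ i, (u i - v i)^2))
    (hpnotbox : ¬ ∀ i, p i ∈ Set.Icc (0:ℝ) 1)
    (hu : ε < ∑ i, |u i - x i|)
    (hqeq : ∑ i, |q i - x i| = ε) :
    ∑ i, |max 0 (min (p i) 1) - x i| < ∑ i, |q i - x i| := by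
  push_neg at hpnotbox
  obtain ⟨i, hi⟩ := hpnotbox
  have hlt : ∑ j, |max 0 (min (p j) 1) - x j| < ∑ j, |p j - x j| := by
    apply Finset.sum_lt_sum
    · intro j _
      exact clip_abs_le (x j) (p j) (hx j).1 (hx j).2
    · exact ⟨i, Finset.mem_univ i,
        clip_abs_lt (x i) (p i) (hx i).1 (hx i).2 hi⟩
  rw [hqeq]
  exact lt_of_lt_of_le hlt hp1
end

section
/- Let d ≥ 1, x ∈ [0,1]^d, ε > 0 and u ∈ ℝ^d. Suppose that P_{B₁(x,ε)}(u) ∉ [0,1]^d, that ‖u − x‖₁ > ε, that ‖P_S(u) − x‖₁ < ε, and that there exists an index i with u_i ∈ [0,1] and u_i ≠ x_i. Then ‖P_S(u) − x‖₁ > ‖A(u) − x‖₁. -/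
private lemma sqrt_le_imp {A B : ℝ} (hB : 0 ≤ B)
    (h : Real.sqrt A ≤ Real.sqrt B) : A ≤ B := by
  by_contra hc
  push_neg at hc
  have := Real.sqrt_lt_sqrt hB hc
  linarith

private lemma sum_split {d : ℕ} (g : Fin d → ℝ) (i : Fin d) :
    ∑ j, g j = g i + ∑ j ∈ Finset.univ.erase i, g j :=
  (Finset.add_sum_erase _ g (Finset.mem_univ i)).symm

private lemma p_improve {d : ℕ} (x u p : Fin d → ℝ) (ε : ℝ)
    (hp1 : ∑ i, |p i - x i| ≤ ε)
    (hp2 : ∀ v : Fin d → ℝ, ∑ i, |v i - x i| ≤ ε →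
      Real.sqrt (∑ i, (u i - p i)^2) ≤ Real.sqrt (∑ i, (u i - v i)^2))
    (i : Fin d) (t : ℝ)
    (h1 : |t - x i| ≤ |p i - x i|) (h2 : (u i - t)^2 < (u i - p i)^2) : False := by
  set v := Function.update p i t with hv
  have hvj : ∀ j, j ≠ i → v j = p j := fun j hj => Function.update_of_ne hj _ _
  have hvi : v i = t := Function.update_self _ _ _
  have hsum : ∑ j, |v j - x j| ≤ ε := by
    rw [sum_split (fun j => |v j - x j|) i]
    rw [sum_split (fun j => |p j - x j|) i] at hp1
    have he : ∑ j ∈ Finset.univ.erase i, |v j - x j|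
        = ∑ j ∈ Finset.univ.erase i, |p j - x j| :=
      Finset.sum_congr rfl (fun j hj => by rw [hvj j (Finset.ne_of_mem_erase hj)])
    simp only [hvi, he]
    linarith
  have hle := sqrt_le_imp (by positivity) (hp2 v hsum)
  rw [sum_split (fun j => (u j - v j)^2) i, sum_split (fun j => (u j - p j)^2) i] at hle
  have heq : ∑ j ∈ Finset.univ.erase i, (u j - v j)^2
      = ∑ j ∈ Finset.univ.erase i, (u j - p j)^2 :=
    Finset.sum_congr rfl (fun j hj => by rw [hvj j (Finset.ne_of_mem_erase hj)])
  simp only [hvi, heq] at hle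
  linarith

private lemma p_between {d : ℕ} (x u p : Fin d → ℝ) (ε : ℝ)
    (hp1 : ∑ i, |p i - x i| ≤ ε)
    (hp2 : ∀ v : Fin d → ℝ, ∑ i, |v i - x i| ≤ ε →
      Real.sqrt (∑ i, (u i - p i)^2) ≤ Real.sqrt (∑ i, (u i - v i)^2))
    (i : Fin d) : min (x i) (u i) ≤ p i ∧ p i ≤ max (x i) (u i) := by
  constructor
  · by_contra h
    push_neg at h
    have hxm : min (x i) (u i) ≤ x i := min_le_left _ _
    have hum : min (x i) (u i) ≤ u i := min_le_right _ _
    refine p_improve x u p ε hp1 hp2 i (min (x i) (u i)) ?_ ?_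
    · rw [abs_of_nonpos (by linarith), abs_of_nonpos (by linarith)]
      linarith
    · nlinarith
  · by_contra h
    push_neg at h
    have hxm : x i ≤ max (x i) (u i) := le_max_left _ _
    have hum : u i ≤ max (x i) (u i) := le_max_right _ _
    refine p_improve x u p ε hp1 hp2 i (max (x i) (u i)) ?_ ?_
    · rw [abs_of_nonneg (by linarith), abs_of_nonneg (by linarith)]
      linarith
    · nlinarith

private lemma p_norm_eq {d : ℕ} (x u p : Fin d → ℝ) (ε : ℝ)
    (hp1 : ∑ i, |p i - x i| ≤ ε)
    (hp2 : ∀ v : Fin d → ℝ, ∑ i, |v i - x i| ≤ ε →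
      Real.sqrt (∑ i, (u i - p i)^2) ≤ Real.sqrt (∑ i, (u i - v i)^2))
    (hu : ε < ∑ i, |u i - x i|) : ∑ i, |p i - x i| = ε := by
  by_contra h
  have hlt : ∑ i, |p i - x i| < ε := lt_of_le_of_ne hp1 h
  set a := ∑ i, |p i - x i| with ha
  set b := ∑ i, |u i - x i| with hb
  have hab : a < b := lt_trans hlt hu
  set t := (ε - a)/(b - a) with htdef
  have ht0 : 0 < t := div_pos (by linarith) (by linarith)
  have ht1 : t < 1 := (div_lt_one (by linarith)).mpr (by linarith)
  set v := fun j => p j + t * (u j - p j) with hvdef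
  have hvsum : ∑ j, |v j - x j| ≤ ε := by
    have hterm : ∀ j, |v j - x j| ≤ (1 - t) * |p j - x j| + t * |u j - x j| := by
      intro j
      have hrw : v j - x j = (1 - t) * (p j - x j) + t * (u j - x j) := by
        simp only [hvdef]; ring
      rw [hrw]
      calc |(1-t)*(p j - x j) + t*(u j - x j)|
          ≤ |(1-t)*(p j - x j)| + |t*(u j - x j)| := abs_add_le _ _
        _ = (1-t)*|p j - x j| + t*|u j - x j| := by
            rw [abs_mul, abs_mul, abs_of_nonneg (by linarith : (0:ℝ) ≤ 1 - t),
              abs_of_nonneg (le_of_lt ht0)]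
    have hts : t * (b - a) = ε - a := div_mul_cancel₀ _ (by linarith : b - a ≠ 0)
    calc ∑ j, |v j - x j| ≤ ∑ j, ((1-t)*|p j - x j| + t*|u j - x j|) :=
          Finset.sum_le_sum (fun j _ => hterm j)
      _ = (1-t)*a + t*b := by
          rw [Finset.sum_add_distrib, ← Finset.mul_sum, ← Finset.mul_sum]
      _ = a + t*(b-a) := by ring
      _ = ε := by rw [hts]; ring
  have hne : ∃ j, p j ≠ u j := by
    by_contra hc
    push_neg at hc
    have : a = b := by
      rw [ha, hb]; exact Finset.sum_congr rfl (fun j _ => by rw [hc j])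
    linarith
  obtain ⟨j0, hj0⟩ := hne
  have hpos : 0 < ∑ j, (u j - p j)^2 := by
    have h1 : (0:ℝ) < (u j0 - p j0)^2 := by
      have : u j0 - p j0 ≠ 0 := sub_ne_zero.mpr (Ne.symm hj0)
      positivity
    have h2 : (u j0 - p j0)^2 ≤ ∑ j, (u j - p j)^2 :=
      Finset.single_le_sum (f := fun j => (u j - p j)^2)
        (fun j _ => sq_nonneg _) (Finset.mem_univ j0)
    linarith
  have hdist : ∑ j, (u j - v j)^2 = (1-t)^2 * ∑ j, (u j - p j)^2 := by
    rw [Finset.mul_sum]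
    exact Finset.sum_congr rfl (fun j _ => by simp only [hvdef]; ring)
  have hle := sqrt_le_imp (by positivity) (hp2 v hvsum)
  rw [hdist] at hle
  nlinarith [mul_pos (mul_pos ht0 (by linarith : (0:ℝ) < 2 - t)) hpos]

private lemma q_improve {d : ℕ} (x u q : Fin d → ℝ) (ε : ℝ)
    (hq1 : ∑ i, |q i - x i| ≤ ε ∧ ∀ i, q i ∈ Set.Icc (0:ℝ) 1)
    (hq2 : ∀ v : Fin d → ℝ, (∑ i, |v i - x i| ≤ ε ∧ ∀ i, v i ∈ Set.Icc (0:ℝ) 1) →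
      Real.sqrt (∑ i, (u i - q i)^2) ≤ Real.sqrt (∑ i, (u i - v i)^2))
    (i : Fin d) (t : ℝ) (hbox : 0 ≤ t ∧ t ≤ 1)
    (h1 : |t - x i| - |q i - x i| + ∑ j, |q j - x j| ≤ ε)
    (h2 : (u i - t)^2 < (u i - q i)^2) : False := by
  set v := Function.update q i t with hv
  have hvj : ∀ j, j ≠ i → v j = q j := fun j hj => Function.update_of_ne hj _ _
  have hvi : v i = t := Function.update_self _ _ _
  have hsum : ∑ j, |v j - x j| ≤ ε := by
    rw [sum_split (fun j => |v j - x j|) i]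
    rw [sum_split (fun j => |q j - x j|) i] at h1
    have he : ∑ j ∈ Finset.univ.erase i, |v j - x j|
        = ∑ j ∈ Finset.univ.erase i, |q j - x j| :=
      Finset.sum_congr rfl (fun j hj => by rw [hvj j (Finset.ne_of_mem_erase hj)])
    simp only [hvi, he]
    linarith
  have hvbox : ∀ j, v j ∈ Set.Icc (0:ℝ) 1 := by
    intro j
    by_cases hj : j = i
    · rw [hj, hvi]; exact ⟨hbox.1, hbox.2⟩
    · rw [hvj j hj]; exact hq1.2 j
  have hle := sqrt_le_imp (by positivity) (hq2 v ⟨hsum, hvbox⟩)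
  rw [sum_split (fun j => (u j - v j)^2) i, sum_split (fun j => (u j - q j)^2) i] at hle
  have heq : ∑ j ∈ Finset.univ.erase i, (u j - v j)^2
      = ∑ j ∈ Finset.univ.erase i, (u j - q j)^2 :=
    Finset.sum_congr rfl (fun j hj => by rw [hvj j (Finset.ne_of_mem_erase hj)])
  simp only [hvi, heq] at hle
  linarith

private lemma q_eq_clip {d : ℕ} (x u q : Fin d → ℝ) (ε : ℝ)
    (hq1 : ∑ i, |q i - x i| ≤ ε ∧ ∀ i, q i ∈ Set.Icc (0:ℝ) 1)
    (hq2 : ∀ v : Fin d → ℝ, (∑ i, |v i - x i| ≤ ε ∧ ∀ i, v i ∈ Set.Icc (0:ℝ) 1) →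
      Real.sqrt (∑ i, (u i - q i)^2) ≤ Real.sqrt (∑ i, (u i - v i)^2))
    (hqlt : ∑ i, |q i - x i| < ε)
    (i : Fin d) : q i = max 0 (min (u i) 1) := by
  set t := max 0 (min (u i) 1) with htdef
  have ht0 : 0 ≤ t := le_max_left _ _
  have ht1 : t ≤ 1 := max_le (by norm_num) (min_le_right _ _)
  have hqi0 := (hq1.2 i).1
  have hqi1 := (hq1.2 i).2
  by_contra hne
  set w := t - q i with hwdef
  have hw : w ≠ 0 := sub_ne_zero.mpr (Ne.symm hne)
  have hw2 : 0 < w^2 := by positivity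
  -- key sign fact : w * (u i - t) ≥ 0
  have hkey : 0 ≤ w * (u i - t) := by
    rcases le_total (u i) 0 with h0 | h0
    · have ht : t = 0 := by
        rw [htdef, min_eq_left (by linarith : u i ≤ 1), max_eq_left h0]
      rw [ht] at hwdef ⊢
      rw [hwdef]
      nlinarith
    · rcases le_total 1 (u i) with h1 | h1
      · have ht : t = 1 := by
          rw [htdef, min_eq_right h1, max_eq_right (by norm_num : (0:ℝ) ≤ 1)]
        rw [ht] at hwdef ⊢
        rw [hwdef]
        nlinarith
      · have ht : t = u i := by
          rw [htdef, min_eq_left h1, max_eq_right h0]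
        rw [ht] at hwdef ⊢
        rw [hwdef]
        nlinarith
  have hwz : w^2 ≤ w * (u i - q i) := by nlinarith
  set s := min 1 ((ε - ∑ j, |q j - x j|)/|w|) with hsdef
  have habs : 0 < |w| := abs_pos.mpr hw
  have hs0 : 0 < s := lt_min (by norm_num) (div_pos (by linarith) habs)
  have hs1 : s ≤ 1 := min_le_left _ _
  have hsw : s * |w| ≤ ε - ∑ j, |q j - x j| := by
    have : s ≤ (ε - ∑ j, |q j - x j|)/|w| := min_le_right _ _
    calc s * |w| ≤ ((ε - ∑ j, |q j - x j|)/|w|) * |w| := by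
          exact mul_le_mul_of_nonneg_right this (le_of_lt habs)
      _ = ε - ∑ j, |q j - x j| := div_mul_cancel₀ _ (ne_of_gt habs)
  refine q_improve x u q ε hq1 hq2 i (q i + s * w) ?_ ?_ ?_
  · constructor
    · nlinarith
    · nlinarith
  · have htri : |q i + s * w - x i| ≤ |q i - x i| + s * |w| := by
      calc |q i + s * w - x i| = |(q i - x i) + s * w| := by ring_nf
        _ ≤ |q i - x i| + |s * w| := abs_add_le _ _
        _ = |q i - x i| + s * |w| := by rw [abs_mul, abs_of_nonneg (le_of_lt hs0)]
    linarith
  · have : (u i - (q i + s * w))^2 = (u i - q i)^2 - s*(2*(w*(u i - q i)) - s*w^2) := by ring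
    rw [this]
    nlinarith [mul_pos hs0 hw2, mul_le_mul_of_nonneg_left hwz hs0.le,
      mul_nonneg (mul_nonneg (sub_nonneg.mpr hs1) hs0.le) hw2.le]

private lemma clip_mono {a b : ℝ} (h : a ≤ b) :
    max 0 (min a 1) ≤ max 0 (min b 1) :=
  max_le_max le_rfl (min_le_min h le_rfl)

private lemma clip_fix {c : ℝ} (h0 : 0 ≤ c) (h1 : c ≤ 1) : max 0 (min c 1) = c := by
  rw [min_eq_left h1, max_eq_right h0]

private lemma clip_abs_le_s5 {c a b : ℝ} (hc0 : 0 ≤ c) (hc1 : c ≤ 1)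
    (h1 : min c b ≤ a) (h2 : a ≤ max c b) :
    |max 0 (min a 1) - c| ≤ |max 0 (min b 1) - c| := by
  rcases le_total c b with h | h
  · have hca : c ≤ a := le_trans (le_of_eq (min_eq_left h).symm) h1
    have hab : a ≤ b := le_trans h2 (le_of_eq (max_eq_right h))
    have hA1 : c ≤ max 0 (min a 1) := by
      have := clip_mono hca; rw [clip_fix hc0 hc1] at this; exact this
    have hA2 : max 0 (min a 1) ≤ max 0 (min b 1) := clip_mono hab
    rw [abs_of_nonneg (by linarith), abs_of_nonneg (by linarith)]
    linarith
  · have hba : b ≤ a := le_trans (le_of_eq (min_eq_right h).symm) h1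
    have hac : a ≤ c := le_trans h2 (le_of_eq (max_eq_left h))
    have hA1 : max 0 (min a 1) ≤ c := by
      have := clip_mono hac; rw [clip_fix hc0 hc1] at this; exact this
    have hA2 : max 0 (min b 1) ≤ max 0 (min a 1) := clip_mono hba
    rw [abs_of_nonpos (by linarith), abs_of_nonpos (by linarith)]
    linarith

private lemma clip_abs_le_self {c a : ℝ} (hc0 : 0 ≤ c) (hc1 : c ≤ 1) :
    |max 0 (min a 1) - c| ≤ |a - c| := by
  rcases le_total a 0 with h | h
  · have hcl : max 0 (min a 1) = 0 := by
      rw [min_eq_left (le_trans h zero_le_one), max_eq_left h]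
    rw [hcl, abs_of_nonpos (by linarith), abs_of_nonpos (by linarith)]
    linarith
  · rcases le_total 1 a with h1 | h1
    · have hcl : max 0 (min a 1) = 1 := by
        rw [min_eq_right h1, max_eq_right zero_le_one]
      rw [hcl, abs_of_nonneg (by linarith), abs_of_nonneg (by linarith)]
      linarith
    · rw [min_eq_left h1, max_eq_right h]

set_option maxHeartbeats 1000000 in
private lemma strict_at {d : ℕ} (x u p : Fin d → ℝ) (ε : ℝ)
    (hp1 : ∑ i, |p i - x i| ≤ ε)
    (hp2 : ∀ v : Fin d → ℝ, ∑ i, |v i - x i| ≤ ε →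
      Real.sqrt (∑ i, (u i - p i)^2) ≤ Real.sqrt (∑ i, (u i - v i)^2))
    (hu : ε < ∑ i, |u i - x i|)
    (i₀ : Fin d) (hxne : u i₀ ≠ x i₀) : |p i₀ - x i₀| < |u i₀ - x i₀| := by
  have hpe := p_norm_eq x u p ε hp1 hp2 hu
  have hbet := p_between x u p ε hp1 hp2 i₀
  by_contra hcon
  push_neg at hcon
  have hpu : p i₀ = u i₀ := by
    rcases le_total (x i₀) (u i₀) with h | h
    · have h1 : x i₀ ≤ p i₀ := le_trans (le_of_eq (min_eq_left h).symm) hbet.1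
      have h2 : p i₀ ≤ u i₀ := le_trans hbet.2 (le_of_eq (max_eq_right h))
      rw [abs_of_nonneg (by linarith), abs_of_nonneg (by linarith)] at hcon
      linarith
    · have h1 : u i₀ ≤ p i₀ := le_trans (le_of_eq (min_eq_right h).symm) hbet.1
      have h2 : p i₀ ≤ x i₀ := le_trans hbet.2 (le_of_eq (max_eq_left h))
      rw [abs_of_nonpos (by linarith), abs_of_nonpos (by linarith)] at hcon
      linarith
  have hex : ∃ j, |p j - x j| < |u j - x j| := by
    by_contra hc
    push_neg at hc
    have : ∑ i, |u i - x i| ≤ ∑ i, |p i - x i| := Finset.sum_le_sum (fun i _ => hc i)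
    linarith
  obtain ⟨j, hj⟩ := hex
  have hji : j ≠ i₀ := by
    intro h
    rw [h, hpu] at hj
    exact lt_irrefl _ hj
  set A := |u j - p j| with hA
  have hAge : |u j - x j| - |p j - x j| ≤ A := by
    have h1 := abs_sub_abs_le_abs_sub (u j - x j) (p j - x j)
    have h2 : (u j - x j) - (p j - x j) = u j - p j := by ring
    rw [h2] at h1
    linarith
  set M := |u i₀ - x i₀| with hM
  have hM0 : 0 < M := abs_pos.mpr (sub_ne_zero.mpr hxne)
  set δ := (1/2) * min M (|u j - x j| - |p j - x j|) with hδ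
  have hmin0 : 0 < min M (|u j - x j| - |p j - x j|) := lt_min hM0 (by linarith)
  have hδ0 : 0 < δ := by rw [hδ]; linarith
  have hδM : δ ≤ M := by
    have := min_le_left M (|u j - x j| - |p j - x j|)
    rw [hδ]; linarith
  have hδA : δ < A := by
    have := min_le_right M (|u j - x j| - |p j - x j|)
    rw [hδ]; linarith
  have hA0 : 0 < A := lt_trans hδ0 hδA
  set θ := δ / M with hθdef
  set φ := δ / A with hφdef
  have hθ : θ * M = δ := div_mul_cancel₀ _ (ne_of_gt hM0)
  have hφ : φ * A = δ := div_mul_cancel₀ _ (ne_of_gt hA0)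
  have hθ0 : 0 < θ := div_pos hδ0 hM0
  have hθ1 : θ ≤ 1 := (div_le_one hM0).mpr hδM
  have hφ0 : 0 < φ := div_pos hδ0 hA0
  have hφ1 : φ ≤ 1 := le_of_lt ((div_lt_one hA0).mpr hδA)
  set v := Function.update (Function.update p j (p j + φ * (u j - p j))) i₀
    (u i₀ + θ * (x i₀ - u i₀)) with hv
  have hvi : v i₀ = u i₀ + θ * (x i₀ - u i₀) := Function.update_self _ _ _
  have hvj : v j = p j + φ * (u j - p j) := by
    rw [hv, Function.update_of_ne hji, Function.update_self]
  have hvk : ∀ k, k ≠ i₀ → k ≠ j → v k = p k := fun k h1 h2 => by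
    rw [hv, Function.update_of_ne h1, Function.update_of_ne h2]
  have habsi : |v i₀ - x i₀| = M - δ := by
    have h1 : v i₀ - x i₀ = (1 - θ) * (u i₀ - x i₀) := by rw [hvi]; ring
    rw [h1, abs_mul, abs_of_nonneg (by linarith : (0:ℝ) ≤ 1 - θ), ← hM]
    linear_combination -hθ
  have habsj : |v j - x j| ≤ |p j - x j| + δ := by
    have h1 : v j - x j = (p j - x j) + φ * (u j - p j) := by rw [hvj]; ring
    calc |v j - x j| ≤ |p j - x j| + |φ * (u j - p j)| := by
          rw [h1]; exact abs_add_le _ _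
      _ = |p j - x j| + φ * A := by rw [abs_mul, abs_of_nonneg (le_of_lt hφ0), ← hA]
      _ = |p j - x j| + δ := by rw [hφ]
  have hsqi : (u i₀ - v i₀)^2 = δ^2 := by
    have h1 : u i₀ - v i₀ = θ * (u i₀ - x i₀) := by rw [hvi]; ring
    calc (u i₀ - v i₀)^2 = θ^2 * (u i₀ - x i₀)^2 := by rw [h1]; ring
      _ = θ^2 * M^2 := by rw [hM, sq_abs]
      _ = (θ * M)^2 := by ring
      _ = δ^2 := by rw [hθ]
  have hsqj : (u j - v j)^2 = (A - δ)^2 := by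
    have h1 : u j - v j = (1 - φ) * (u j - p j) := by rw [hvj]; ring
    calc (u j - v j)^2 = (1 - φ)^2 * (u j - p j)^2 := by rw [h1]; ring
      _ = (1 - φ)^2 * A^2 := by rw [hA, sq_abs]
      _ = (A - φ * A)^2 := by ring
      _ = (A - δ)^2 := by rw [hφ]
  have hsqi0 : (u i₀ - p i₀)^2 = 0 := by rw [hpu]; ring
  have hApj : (u j - p j)^2 = A^2 := by rw [hA, sq_abs]
  have hjmem : j ∈ Finset.univ.erase i₀ := Finset.mem_erase.mpr ⟨hji, Finset.mem_univ j⟩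
  have hsplit : ∀ g : Fin d → ℝ,
      ∑ k, g k = g i₀ + g j + ∑ k ∈ (Finset.univ.erase i₀).erase j, g k := by
    intro g
    rw [sum_split g i₀, ← Finset.add_sum_erase _ g hjmem]
    ring
  have hpM : |p i₀ - x i₀| = M := by rw [hpu, hM]
  have hvsum : ∑ k, |v k - x k| ≤ ε := by
    rw [hsplit (fun k => |v k - x k|)]
    rw [hsplit (fun k => |p k - x k|)] at hpe
    have hE : ∑ k ∈ (Finset.univ.erase i₀).erase j, |v k - x k|
        = ∑ k ∈ (Finset.univ.erase i₀).erase j, |p k - x k| := by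
      refine Finset.sum_congr rfl (fun k hk => ?_)
      obtain ⟨hk1, hk2⟩ := Finset.mem_erase.mp hk
      obtain ⟨hk3, _⟩ := Finset.mem_erase.mp hk2
      rw [hvk k hk3 hk1]
    simp only [hE, habsi]
    linarith [habsj]
  have hle := sqrt_le_imp (by positivity) (hp2 v hvsum)
  rw [hsplit (fun k => (u k - v k)^2), hsplit (fun k => (u k - p k)^2)] at hle
  have hE2 : ∑ k ∈ (Finset.univ.erase i₀).erase j, (u k - v k)^2
      = ∑ k ∈ (Finset.univ.erase i₀).erase j, (u k - p k)^2 := by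
    refine Finset.sum_congr rfl (fun k hk => ?_)
    obtain ⟨hk1, hk2⟩ := Finset.mem_erase.mp hk
    obtain ⟨hk3, _⟩ := Finset.mem_erase.mp hk2
    rw [hvk k hk3 hk1]
  simp only [hE2, hsqi, hsqj, hsqi0, hApj] at hle
  nlinarith [mul_pos hδ0 (by linarith : (0:ℝ) < A - δ)]

/-- Strict-inequality case of Lemma 2 of the paper when the exact projection lies in the
interior of the `l1`-ball: if `P_{B₁(x,ε)}(u) ∉ [0,1]^d`, `‖u−x‖₁ > ε`, `‖P_S(u)−x‖₁ < ε`
and some coordinate `u i ∈ [0,1]` with `u i ≠ x i` exists, then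
`‖P_S(u)−x‖₁ > ‖A(u)−x‖₁`. Here `p` is the Euclidean projection of `u` onto the `l1`-ball
`B₁(x,ε)` and `q` the Euclidean projection of `u` onto `S = B₁(x,ε) ∩ [0,1]^d`. -/
theorem exact_projection_l1_dist_gt_approx_interior
    (d : ℕ) (hd : 1 ≤ d) (x u : Fin d → ℝ)
    (hx : ∀ i, x i ∈ Set.Icc (0:ℝ) 1) (ε : ℝ) (hε : 0 < ε)
    (p : Fin d → ℝ)
    (hp1 : ∑ i, |p i - x i| ≤ ε)
    (hp2 : ∀ v : Fin d → ℝ, ∑ i, |v i - x i| ≤ ε →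
      Real.sqrt (∑ i, (u i - p i)^2) ≤ Real.sqrt (∑ i, (u i - v i)^2))
    (q : Fin d → ℝ)
    (hq1 : ∑ i, |q i - x i| ≤ ε ∧ ∀ i, q i ∈ Set.Icc (0:ℝ) 1)
    (hq2 : ∀ v : Fin d → ℝ, (∑ i, |v i - x i| ≤ ε ∧ ∀ i, v i ∈ Set.Icc (0:ℝ) 1) →
      Real.sqrt (∑ i, (u i - q i)^2) ≤ Real.sqrt (∑ i, (u i - v i)^2))
    (hpnotbox : ¬ ∀ i, p i ∈ Set.Icc (0:ℝ) 1)
    (hu : ε < ∑ i, |u i - x i|)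
    (hqlt : ∑ i, |q i - x i| < ε)
    (hi : ∃ i, u i ∈ Set.Icc (0:ℝ) 1 ∧ u i ≠ x i) :
    ∑ i, |max 0 (min (p i) 1) - x i| < ∑ i, |q i - x i| := by
  obtain ⟨i₀, hiu, hine⟩ := hi
  have hqc := q_eq_clip x u q ε hq1 hq2 hqlt
  have hstrict := strict_at x u p ε hp1 hp2 hu i₀ hine
  refine Finset.sum_lt_sum (fun i _ => ?_) ⟨i₀, Finset.mem_univ _, ?_⟩
  · rw [hqc i]
    exact clip_abs_le_s5 (hx i).1 (hx i).2 (p_between x u p ε hp1 hp2 i).1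
      (p_between x u p ε hp1 hp2 i).2
  · rw [hqc i₀, clip_fix hiu.1 hiu.2]
    calc |max 0 (min (p i₀) 1) - x i₀| ≤ |p i₀ - x i₀| :=
          clip_abs_le_self (hx i₀).1 (hx i₀).2
      _ < |u i₀ - x i₀| := hstrict
end

section
/- Let d ≥ 1, x ∈ [0,1]^d, ε > 0 and u ∈ ℝ^d with ‖u − x‖₁ ≤ ε. Then the Euclidean projection of u onto S = B₁(x,ε) ∩ [0,1]^d equals the componentwise clipping of u to [0,1]^d, i.e. P_S(u) = P_H(u). -/
private lemma clamp_mem (u : ℝ) : max 0 (min u 1) ∈ Set.Icc (0:ℝ) 1 := by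
  constructor
  · exact le_max_left _ _
  · rcases le_total u 1 with h | h
    · simp [min_eq_left h]; linarith
    · simp [min_eq_right h]

private lemma clamp_abs_le {x u : ℝ} (hx0 : 0 ≤ x) (hx1 : x ≤ 1) :
    |max 0 (min u 1) - x| ≤ |u - x| := by
  rcases le_total u 0 with h | h
  · rw [min_eq_left (h.trans zero_le_one), max_eq_left h,
      abs_of_nonpos (by linarith), abs_of_nonpos (by linarith)]
    linarith
  · rcases le_total 1 u with h1 | h1
    · rw [min_eq_right h1, max_eq_right zero_le_one,
        abs_of_nonneg (by linarith), abs_of_nonneg (by linarith)]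
      linarith
    · rw [min_eq_left h1, max_eq_right h]

private lemma clamp_sq_le {u q : ℝ} (hq0 : 0 ≤ q) (hq1 : q ≤ 1) :
    (u - max 0 (min u 1))^2 ≤ (u - q)^2 := by
  rcases le_total u 0 with h | h
  · rw [min_eq_left (h.trans zero_le_one), max_eq_left h]
    nlinarith
  · rcases le_total 1 u with h1 | h1
    · rw [min_eq_right h1, max_eq_right zero_le_one]
      nlinarith
    · rw [min_eq_left h1, max_eq_right h]
      simpa using sq_nonneg (u - q)

private lemma clamp_sq_eq {u q : ℝ} (hq0 : 0 ≤ q) (hq1 : q ≤ 1)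
    (h : (u - q)^2 = (u - max 0 (min u 1))^2) : q = max 0 (min u 1) := by
  rcases le_total u 0 with hu | hu
  · rw [min_eq_left (hu.trans zero_le_one), max_eq_left hu] at h ⊢
    have hq2 : q^2 ≤ 0 := by nlinarith
    have : q^2 = 0 := le_antisymm hq2 (sq_nonneg q)
    exact pow_eq_zero_iff (by norm_num) |>.mp this
  · rcases le_total 1 u with h1 | h1
    · rw [min_eq_right h1, max_eq_right zero_le_one] at h ⊢
      have : (1 - q)^2 ≤ 0 := by nlinarith
      have h0 : (1 - q)^2 = 0 := le_antisymm this (sq_nonneg _)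
      have := pow_eq_zero_iff (n := 2) (by norm_num) |>.mp h0
      linarith
    · rw [min_eq_left h1, max_eq_right hu] at h ⊢
      have : (u - q)^2 = 0 := by nlinarith
      have := pow_eq_zero_iff (n := 2) (by norm_num) |>.mp this
      linarith

/-- If `‖u − x‖₁ ≤ ε`, the Euclidean projection of `u` onto `S = B₁(x,ε) ∩ [0,1]^d` equals
the componentwise clipping `P_H(u)` of `u` to `[0,1]^d`. Here `q` is characterized as the
Euclidean projection of `u` onto `S` (membership plus `l2`-minimality). -/
theorem projection_eq_clip_of_l1_le
    (d : ℕ) (hd : 1 ≤ d) (x u : Fin d → ℝ)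
    (hx : ∀ i, x i ∈ Set.Icc (0:ℝ) 1) (ε : ℝ) (hε : 0 < ε)
    (hu : ∑ i, |u i - x i| ≤ ε)
    (q : Fin d → ℝ)
    (hq1 : ∑ i, |q i - x i| ≤ ε ∧ ∀ i, q i ∈ Set.Icc (0:ℝ) 1)
    (hq2 : ∀ v : Fin d → ℝ, (∑ i, |v i - x i| ≤ ε ∧ ∀ i, v i ∈ Set.Icc (0:ℝ) 1) →
      Real.sqrt (∑ i, (u i - q i)^2) ≤ Real.sqrt (∑ i, (u i - v i)^2)) :
    q = fun i => max 0 (min (u i) 1) := by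
  set c : Fin d → ℝ := fun i => max 0 (min (u i) 1) with hc
  -- c is feasible
  have hcfeas : (∑ i, |c i - x i| ≤ ε ∧ ∀ i, c i ∈ Set.Icc (0:ℝ) 1) := by
    constructor
    · refine le_trans (Finset.sum_le_sum fun i _ => ?_) hu
      exact clamp_abs_le (hx i).1 (hx i).2
    · exact fun i => clamp_mem (u i)
  -- sqrt comparison gives sum comparison
  have hsq : ∑ i, (u i - q i)^2 ≤ ∑ i, (u i - c i)^2 := by
    have h := hq2 c hcfeas
    have h0 : (0:ℝ) ≤ ∑ i, (u i - c i)^2 := Finset.sum_nonneg fun i _ => sq_nonneg _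
    exact (Real.sqrt_le_sqrt_iff (y := ∑ i, (u i - c i)^2) h0).mp h
  have hge : ∀ i ∈ Finset.univ, (u i - c i)^2 ≤ (u i - q i)^2 := fun i _ =>
    clamp_sq_le ((hq1.2 i).1) ((hq1.2 i).2)
  have hsumeq : ∑ i, (u i - q i)^2 = ∑ i, (u i - c i)^2 :=
    le_antisymm hsq (Finset.sum_le_sum hge)
  have hterm : ∀ i ∈ Finset.univ, (u i - q i)^2 = (u i - c i)^2 := by
    intro i hi
    exact ((Finset.sum_eq_sum_iff_of_le hge).mp hsumeq.symm i hi).symm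
  funext i
  exact clamp_sq_eq ((hq1.2 i).1) ((hq1.2 i).2) (hterm i (Finset.mem_univ i))
end

section
/- Let d ≥ 1, x, u ∈ ℝ^d and ε > 0 with ‖u − x‖₁ > ε. Suppose λ* > 0 satisfies ∑_{i=1}^d max{0, |u_i − x_i| − λ*} = ε. Then the point z₁ defined by z₁_i = x_i + sign(u_i − x_i)·max{0, |u_i − x_i| − λ*} satisfies ‖z₁ − x‖₁ = ε and is the Euclidean projection of u onto B₁(x,ε), i.e. ‖u − z₁‖₂ ≤ ‖u − z‖₂ for every z with ‖z − x‖₁ ≤ ε. -/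
lemma soft_aux (a lam : ℝ) (hlam : 0 < lam) (s : ℝ)
    (hs : s = Real.sign a * max 0 (|a| - lam)) :
    |s| = max 0 (|a| - lam) ∧ (a - s) * s = lam * max 0 (|a| - lam) ∧ |a - s| ≤ lam := by
  rcases lt_trichotomy a 0 with h | h | h
  · rw [Real.sign_of_neg h, abs_of_neg h] at hs
    rw [abs_of_neg h]
    rcases le_total (-a) lam with hle | hle
    · rw [max_eq_left (by linarith)] at hs ⊢
      refine ⟨by rw [hs]; simp, by rw [hs]; ring, ?_⟩
      have h0 : a - -1 * 0 = a := by ring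
      rw [hs, h0, abs_le]
      exact ⟨by linarith, by linarith⟩
    · rw [max_eq_right (by linarith)] at hs ⊢
      refine ⟨?_, by rw [hs]; ring, ?_⟩
      · have h0 : -1 * (-a - lam) = a + lam := by ring
        rw [hs, h0, abs_of_nonpos (by linarith)]; ring
      · have h0 : a - -1 * (-a - lam) = -lam := by ring
        rw [hs, h0, abs_neg, abs_of_pos hlam]
  · subst h
    simp only [Real.sign_zero, zero_mul] at hs
    subst hs
    have hm : max 0 (|(0:ℝ)| - lam) = 0 := max_eq_left (by simp; linarith)
    simp [hm, hlam.le]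
  · rw [Real.sign_of_pos h, abs_of_pos h] at hs
    rw [abs_of_pos h]
    rcases le_total a lam with hle | hle
    · rw [max_eq_left (by linarith)] at hs ⊢
      refine ⟨by rw [hs]; simp, by rw [hs]; ring, ?_⟩
      have h0 : a - 1 * 0 = a := by ring
      rw [hs, h0, abs_le]
      exact ⟨by linarith, by linarith⟩
    · rw [max_eq_right (by linarith)] at hs ⊢
      refine ⟨?_, by rw [hs]; ring, ?_⟩
      · have h0 : (1:ℝ) * (a - lam) = a - lam := by ring
        rw [hs, h0, abs_of_nonneg (by linarith)]
      · have h0 : a - 1 * (a - lam) = lam := by ring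
        rw [hs, h0, abs_of_pos hlam]

/-- Soft-thresholding characterization of the projection onto the `l1`-ball `B₁(x,ε)`:
if `‖u − x‖₁ > ε` and `λ* > 0` solves `∑ i, max{0, |u_i − x_i| − λ*} = ε`, then
`z₁ = x + sign(u − x) · max{0, |u − x| − λ*}` satisfies `‖z₁ − x‖₁ = ε` and is the
Euclidean projection of `u` onto `B₁(x,ε)`. -/
theorem soft_thresholding_is_l1_ball_projection
    (d : ℕ) (hd : 1 ≤ d) (x u : Fin d → ℝ) (ε : ℝ) (hε : 0 < ε)
    (hu : ε < ∑ i, |u i - x i|)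
    (lam : ℝ) (hlam : 0 < lam)
    (hsum : ∑ i, max 0 (|u i - x i| - lam) = ε)
    (z₁ : Fin d → ℝ)
    (hz : ∀ i, z₁ i = x i + Real.sign (u i - x i) * max 0 (|u i - x i| - lam)) :
    ∑ i, |z₁ i - x i| = ε ∧
      ∀ v : Fin d → ℝ, ∑ i, |v i - x i| ≤ ε →
        Real.sqrt (∑ i, (u i - z₁ i)^2) ≤ Real.sqrt (∑ i, (u i - v i)^2) := by
  have key : ∀ i, |z₁ i - x i| = max 0 (|u i - x i| - lam) ∧
      (u i - x i - (z₁ i - x i)) * (z₁ i - x i) = lam * max 0 (|u i - x i| - lam) ∧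
      |u i - x i - (z₁ i - x i)| ≤ lam := fun i =>
    soft_aux (u i - x i) lam hlam (z₁ i - x i) (by rw [hz i]; ring)
  constructor
  · calc ∑ i, |z₁ i - x i| = ∑ i, max 0 (|u i - x i| - lam) :=
          Finset.sum_congr rfl fun i _ => (key i).1
      _ = ε := hsum
  · intro v hv
    apply Real.sqrt_le_sqrt
    have h1 : ∑ i, (u i - z₁ i) * (z₁ i - x i) = lam * ε := by
      rw [← hsum, Finset.mul_sum]
      refine Finset.sum_congr rfl fun i _ => ?_
      have := (key i).2.1
      linarith [this]
    have h2 : ∑ i, (u i - z₁ i) * (v i - x i) ≤ lam * ε := by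
      calc ∑ i, (u i - z₁ i) * (v i - x i) ≤ ∑ i, lam * |v i - x i| := by
            refine Finset.sum_le_sum fun i _ => ?_
            calc (u i - z₁ i) * (v i - x i) ≤ |(u i - z₁ i) * (v i - x i)| := le_abs_self _
              _ = |u i - z₁ i| * |v i - x i| := abs_mul _ _
              _ ≤ lam * |v i - x i| := by
                  apply mul_le_mul_of_nonneg_right _ (abs_nonneg _)
                  have := (key i).2.2
                  have h0 : u i - x i - (z₁ i - x i) = u i - z₁ i := by ring
                  rwa [h0] at this
        _ = lam * ∑ i, |v i - x i| := (Finset.mul_sum _ _ _).symm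
        _ ≤ lam * ε := mul_le_mul_of_nonneg_left hv hlam.le
    have h3 : ∑ i, (u i - z₁ i) * (v i - z₁ i) ≤ 0 := by
      have heq : ∑ i, (u i - z₁ i) * (v i - z₁ i)
          = ∑ i, (u i - z₁ i) * (v i - x i) - ∑ i, (u i - z₁ i) * (z₁ i - x i) := by
        rw [← Finset.sum_sub_distrib]
        exact Finset.sum_congr rfl fun i _ => by ring
      rw [heq, h1]; linarith
    have h4 : ∑ i, (u i - v i)^2
        = ∑ i, (u i - z₁ i)^2 - 2 * ∑ i, (u i - z₁ i) * (v i - z₁ i)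
          + ∑ i, (z₁ i - v i)^2 := by
      rw [Finset.mul_sum, ← Finset.sum_sub_distrib, ← Finset.sum_add_distrib]
      exact Finset.sum_congr rfl fun i _ => by ring
    have h5 : 0 ≤ ∑ i, (z₁ i - v i)^2 := Finset.sum_nonneg fun i _ => sq_nonneg _
    linarith
end

section
/- Given w ∈ ℝ^d, x ∈ [0,1]^d and ε > 0, set z_i = max{(1−x_i)·sign(w_i), −x_i·sign(w_i)}, let π be a permutation of {1,…,d} with |w_{π_1}| ≥ |w_{π_2}| ≥ … ≥ |w_{π_d}|, assume ∑_{i=1}^d z_i ≥ ε, and let k be the smallest integer with ∑_{i=1}^k z_{π_i} ≥ ε. Define δ* by δ*_{π_i} = z_{π_i}·sign(w_{π_i}) for i < k, δ*_{π_k} = (ε − ∑_{i=1}^{k−1} z_{π_i})·sign(w_{π_k}), and δ*_{π_i} = 0 for i > k. Then δ* is feasible, i.e. ‖δ*‖₁ ≤ ε and x + δ* ∈ [0,1]^d, and it maximizes the linear functional: ⟨w, δ⟩ ≤ ⟨w, δ*⟩ for every δ ∈ ℝ^d with ‖δ‖₁ ≤ ε and x + δ ∈ [0,1]^d. -/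
/-- Proposition 3 of the paper: the explicitly constructed `δ*` is the steepest descent
direction for the threat model `B₁(x,ε) ∩ [0,1]^d`, i.e. it is feasible and maximizes
`⟨w, δ⟩` over all `δ` with `‖δ‖₁ ≤ ε` and `x + δ ∈ [0,1]^d`. The permutation `π` orders the
coordinates by decreasing `|w|`, and `k` is the smallest integer with
`∑_{i=1}^k z_{π_i} ≥ ε` (1-based indexing in the paper corresponds to `i.val + 1` here). -/
theorem steepest_descent_direction_l1_ball_inter_box
    (d : ℕ) (hd : 1 ≤ d) (w x : Fin d → ℝ)
    (hx : ∀ i, x i ∈ Set.Icc (0:ℝ) 1) (ε : ℝ) (hε : 0 < ε)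
    (z : Fin d → ℝ)
    (hz : ∀ i, z i = max ((1 - x i) * Real.sign (w i)) (-(x i) * Real.sign (w i)))
    (π : Equiv.Perm (Fin d))
    (hπ : ∀ i j : Fin d, i ≤ j → |w (π j)| ≤ |w (π i)|)
    (hfeas : ε ≤ ∑ i, z i)
    (k : ℕ) (hk1 : 1 ≤ k) (hkd : k ≤ d)
    (hk : ε ≤ ∑ i ∈ Finset.univ.filter (fun i : Fin d => i.val < k), z (π i))
    (hkmin : ∀ m : ℕ, m < k →
      ∑ i ∈ Finset.univ.filter (fun i : Fin d => i.val < m), z (π i) < ε)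
    (δ : Fin d → ℝ)
    (hδ : ∀ i : Fin d, δ (π i) =
      if i.val + 1 < k then z (π i) * Real.sign (w (π i))
      else if i.val + 1 = k then
        (ε - ∑ j ∈ Finset.univ.filter (fun j : Fin d => j.val + 1 < k), z (π j))
          * Real.sign (w (π i))
      else 0) :
    (∑ i, |δ i| ≤ ε ∧ ∀ i, x i + δ i ∈ Set.Icc (0:ℝ) 1) ∧
      ∀ δ' : Fin d → ℝ, (∑ i, |δ' i| ≤ ε ∧ ∀ i, x i + δ' i ∈ Set.Icc (0:ℝ) 1) →
        ∑ i, w i * δ' i ≤ ∑ i, w i * δ i := by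
  -- values of z depending on the sign of w
  have hzneg : ∀ i, w i < 0 → z i = x i := by
    intro i h
    rw [hz i, Real.sign_of_neg h, max_eq_right (by nlinarith)]
    ring
  have hzpos : ∀ i, 0 < w i → z i = 1 - x i := by
    intro i h
    rw [hz i, Real.sign_of_pos h, max_eq_left (by nlinarith [(hx i).1, (hx i).2])]
    ring
  have hzzero : ∀ i, w i = 0 → z i = 0 := by
    intro i h
    rw [hz i, h, Real.sign_zero]
    simp
  have hz0 : ∀ i, 0 ≤ z i := by
    intro i
    rcases lt_trichotomy (w i) 0 with h | h | h
    · rw [hzneg i h]; exact (hx i).1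
    · rw [hzzero i h]
    · rw [hzpos i h]; linarith [(hx i).2]
  -- |t * sign (w i)| = t for 0 ≤ t ≤ z i
  have habs : ∀ i t, 0 ≤ t → t ≤ z i → |t * Real.sign (w i)| = t := by
    intro i t ht0 htz
    rcases lt_trichotomy (w i) 0 with h | h | h
    · rw [Real.sign_of_neg h]; rw [abs_of_nonpos (by nlinarith)]; ring
    · have : t = 0 := le_antisymm (by rw [hzzero i h] at htz; exact htz) ht0
      simp [this]
    · rw [Real.sign_of_pos h]; rw [abs_of_nonneg (by nlinarith)]; ring
  -- box feasibility for a step t * sign (w i) with 0 ≤ t ≤ z i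
  have hbox : ∀ i t, 0 ≤ t → t ≤ z i → x i + t * Real.sign (w i) ∈ Set.Icc (0:ℝ) 1 := by
    intro i t ht0 htz
    rcases lt_trichotomy (w i) 0 with h | h | h
    · rw [Real.sign_of_neg h]
      rw [hzneg i h] at htz
      constructor <;> nlinarith [(hx i).1, (hx i).2]
    · rw [h, Real.sign_zero]
      constructor <;> simp [(hx i).1, (hx i).2]
    · rw [Real.sign_of_pos h]
      rw [hzpos i h] at htz
      constructor <;> nlinarith [(hx i).1, (hx i).2]
  -- the pivot index
  set kp : Fin d := ⟨k - 1, by omega⟩ with hkp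
  have hkpv : (kp : ℕ) = k - 1 := rfl
  set S : ℝ := ∑ j ∈ Finset.univ.filter (fun j : Fin d => j.val + 1 < k), z (π j) with hS
  set r : ℝ := ε - S with hr
  have hfilter1 : Finset.univ.filter (fun i : Fin d => i.val + 1 < k)
      = Finset.univ.filter (fun i : Fin d => i.val < k - 1) := by
    ext i; simp only [Finset.mem_filter, Finset.mem_univ, true_and]; omega
  have hrpos : 0 < r := by
    have := hkmin (k - 1) (by omega)
    rw [hr, hS, hfilter1]
    linarith
  have hsplit : Finset.univ.filter (fun i : Fin d => i.val < k)
      = insert kp (Finset.univ.filter (fun i : Fin d => i.val + 1 < k)) := by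
    ext i
    simp only [Finset.mem_filter, Finset.mem_univ, true_and, Finset.mem_insert, Fin.ext_iff]
    omega
  have hkp_notmem : kp ∉ Finset.univ.filter (fun i : Fin d => i.val + 1 < k) := by
    simp only [Finset.mem_filter, Finset.mem_univ, true_and]
    omega
  have hrle : r ≤ z (π kp) := by
    have : (∑ i ∈ Finset.univ.filter (fun i : Fin d => i.val < k), z (π i))
        = z (π kp) + S := by
      rw [hsplit, Finset.sum_insert hkp_notmem]
    rw [hr]
    rw [this] at hk
    linarith
  -- absolute values of δ along π
  have hδabs : ∀ p : Fin d, |δ (π p)| =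
      if p.val + 1 < k then z (π p) else if p.val + 1 = k then r else 0 := by
    intro p
    rw [hδ p]
    split_ifs with h1 h2
    · exact habs _ _ (hz0 _) le_rfl
    · have hp : p = kp := by rw [Fin.ext_iff]; omega
      rw [hp]
      exact habs _ _ hrpos.le hrle
    · simp
  -- ℓ¹ norm of δ is exactly ε
  have h1norm : ∑ i, |δ i| = ε := by
    rw [← Equiv.sum_comp π (fun i => |δ i|)]
    calc ∑ p, |δ (π p)|
        = ∑ p, (if p.val + 1 < k then z (π p) else if p.val + 1 = k then r else 0) :=
          Finset.sum_congr rfl fun p _ => hδabs p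
      _ = ε := by
          rw [← Finset.sum_filter_add_sum_filter_not Finset.univ
            (fun p : Fin d => p.val + 1 < k)]
          have e1 : ∑ p ∈ Finset.univ.filter (fun p : Fin d => p.val + 1 < k),
              (if p.val + 1 < k then z (π p) else if p.val + 1 = k then r else 0) = S := by
            rw [hS]
            refine Finset.sum_congr rfl fun p hp => ?_
            rw [Finset.mem_filter] at hp
            rw [if_pos hp.2]
          have e2 : ∑ p ∈ Finset.univ.filter (fun p : Fin d => ¬ p.val + 1 < k),
              (if p.val + 1 < k then z (π p) else if p.val + 1 = k then r else 0) = r := by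
            have : ∀ p ∈ Finset.univ.filter (fun p : Fin d => ¬ p.val + 1 < k),
                (if p.val + 1 < k then z (π p) else if p.val + 1 = k then r else 0)
                = if p = kp then r else 0 := by
              intro p hp
              rw [Finset.mem_filter] at hp
              rw [if_neg hp.2]
              by_cases h : p = kp
              · rw [if_pos h, if_pos (by rw [h]; omega)]
              · rw [if_neg h, if_neg (by rw [Fin.ext_iff] at h; omega)]
            rw [Finset.sum_congr rfl this, Finset.sum_ite_eq' _ kp (fun _ => r),
              if_pos (by simp only [Finset.mem_filter, Finset.mem_univ, true_and]; omega)]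
          rw [e1, e2, hr]
          ring
  -- feasibility of δ
  have hfeasδ : ∑ i, |δ i| ≤ ε ∧ ∀ i, x i + δ i ∈ Set.Icc (0:ℝ) 1 := by
    constructor
    · rw [h1norm]
    · intro i
      have hi : i = π (π.symm i) := (Equiv.apply_symm_apply π i).symm
      rw [hi, hδ (π.symm i)]
      split_ifs with h1 h2
      · exact hbox _ _ (hz0 _) le_rfl
      · have hp : π.symm i = kp := by rw [Fin.ext_iff]; omega
        rw [hp]
        exact hbox _ _ hrpos.le hrle
      · simpa using hbox _ 0 le_rfl (hz0 _)
  refine ⟨hfeasδ, ?_⟩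
  -- optimality
  intro δ' ⟨h1', h2'⟩
  -- pointwise bound on w i * δ' i
  have hU : ∀ i, w i * δ' i ≤ |w i| * min (|δ' i|) (z i) := by
    intro i
    have hb1 : w i * δ' i ≤ |w i| * |δ' i| := by
      calc w i * δ' i ≤ |w i * δ' i| := le_abs_self _
        _ = |w i| * |δ' i| := abs_mul _ _
    have hb2 : w i * δ' i ≤ |w i| * z i := by
      rcases lt_trichotomy (w i) 0 with h | h | h
      · rw [abs_of_neg h, hzneg i h]
        nlinarith [(h2' i).1]
      · simp [h]
      · rw [abs_of_pos h, hzpos i h]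
        nlinarith [(h2' i).2]
    rw [mul_min_of_nonneg _ _ (abs_nonneg (w i))]
    exact le_min hb1 hb2
  -- w · δ in absolute-value form
  have hδval : ∀ p : Fin d, w (π p) * δ (π p) = |w (π p)| * |δ (π p)| := by
    intro p
    rw [hδabs p, hδ p]
    split_ifs with h1 h2
    · rcases lt_trichotomy (w (π p)) 0 with h | h | h
      · rw [Real.sign_of_neg h, abs_of_neg h]; ring
      · rw [h, Real.sign_zero]; simp
      · rw [Real.sign_of_pos h, abs_of_pos h]; ring
    · rcases lt_trichotomy (w (π p)) 0 with h | h | h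
      · rw [Real.sign_of_neg h, abs_of_neg h]; ring
      · rw [h, Real.sign_zero]; simp
      · rw [Real.sign_of_pos h, abs_of_pos h]; ring
    · simp
  -- exchange argument
  set cs : ℝ := |w (π kp)| with hcs
  set A : Fin d → ℝ := fun p => min (|δ' (π p)|) (z (π p)) with hA
  set B : Fin d → ℝ := fun p => |δ (π p)| with hB
  have hA0 : ∀ p, 0 ≤ A p := fun p => le_min (abs_nonneg _) (hz0 _)
  have hpt : ∀ p : Fin d, cs * (B p - A p) ≤ |w (π p)| * (B p - A p) := by
    intro p
    rcases lt_trichotomy (p.val + 1) k with h1 | h1 | h1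
    · -- before the pivot: B p = z (π p) ≥ A p, and |w (π p)| ≥ cs
      have hBp : B p = z (π p) := by rw [hB]; simp only; rw [hδabs p, if_pos h1]
      have hAle : A p ≤ z (π p) := min_le_right _ _
      have hw : cs ≤ |w (π p)| := hπ p kp (by rw [Fin.le_def]; omega)
      have : 0 ≤ B p - A p := by rw [hBp]; linarith
      exact mul_le_mul_of_nonneg_right hw this
    · -- the pivot itself
      have hp : p = kp := by rw [Fin.ext_iff]; omega
      rw [hp]
    · -- after the pivot: B p = 0 ≥ A p is false, B p - A p ≤ 0, |w (π p)| ≤ cs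
      have hBp : B p = 0 := by
        rw [hB]; simp only; rw [hδabs p, if_neg (by omega), if_neg (by omega)]
      have hw : |w (π p)| ≤ cs := hπ kp p (by rw [Fin.le_def]; omega)
      have : B p - A p ≤ 0 := by rw [hBp]; linarith [hA0 p]
      exact mul_le_mul_of_nonpos_right hw this
  have hsumA : ∑ p, A p ≤ ε := by
    calc ∑ p, A p ≤ ∑ p, |δ' (π p)| := Finset.sum_le_sum fun p _ => min_le_left _ _
      _ = ∑ i, |δ' i| := Equiv.sum_comp π (fun i => |δ' i|)
      _ ≤ ε := h1'
  have hsumB : ∑ p, B p = ε := by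
    rw [hB]
    calc ∑ p, |δ (π p)| = ∑ i, |δ i| := Equiv.sum_comp π (fun i => |δ i|)
      _ = ε := h1norm
  have hexch : ∑ p, |w (π p)| * A p ≤ ∑ p, |w (π p)| * B p := by
    have s1 : ∑ p, cs * (B p - A p) ≤ ∑ p, |w (π p)| * (B p - A p) :=
      Finset.sum_le_sum fun p _ => hpt p
    have s2 : ∑ p, cs * (B p - A p) = cs * (∑ p, B p - ∑ p, A p) := by
      rw [← Finset.mul_sum, Finset.sum_sub_distrib]
    have s3 : ∑ p, |w (π p)| * (B p - A p)
        = ∑ p, |w (π p)| * B p - ∑ p, |w (π p)| * A p := by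
      rw [← Finset.sum_sub_distrib]
      exact Finset.sum_congr rfl fun p _ => by ring
    have s4 : 0 ≤ cs * (∑ p, B p - ∑ p, A p) :=
      mul_nonneg (abs_nonneg _) (by rw [hsumB]; linarith)
    rw [s2] at s1
    rw [s3] at s1
    linarith
  calc ∑ i, w i * δ' i
      = ∑ p, w (π p) * δ' (π p) := (Equiv.sum_comp π (fun i => w i * δ' i)).symm
    _ ≤ ∑ p, |w (π p)| * A p := Finset.sum_le_sum fun p _ => hU (π p)
    _ ≤ ∑ p, |w (π p)| * B p := hexch
    _ = ∑ p, w (π p) * δ (π p) := Finset.sum_congr rfl fun p _ => (hδval p).symm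
    _ = ∑ i, w i * δ i := Equiv.sum_comp π (fun i => w i * δ i)
end

section
/- Given w ∈ ℝ^d, x ∈ [0,1]^d and ε > 0, set z_i = max{(1−x_i)·sign(w_i), −x_i·sign(w_i)}, let π be a permutation of {1,…,d} with |w_{π_1}| ≥ |w_{π_2}| ≥ … ≥ |w_{π_d}|, assume ∑_{i=1}^d z_i ≥ ε, and let k be the smallest integer with ∑_{i=1}^k z_{π_i} ≥ ε. Then the maximum of ⟨w, δ⟩ over all δ ∈ ℝ^d with ‖δ‖₁ ≤ ε and x + δ ∈ [0,1]^d equals ∑_{i=1}^{k−1} |w_{π_i}|·z_{π_i} + |w_{π_k}|·(ε − ∑_{i=1}^{k−1} z_{π_i}). -/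
private lemma my_sign_mul_self (a : ℝ) : a * Real.sign a = |a| := by
  rcases lt_trichotomy a 0 with h|h|h
  · rw [Real.sign_of_neg h, abs_of_neg h]; ring
  · simp [h]
  · rw [Real.sign_of_pos h, abs_of_pos h]; ring

private lemma my_abs_sign_le (a : ℝ) : |Real.sign a| ≤ 1 := by
  rcases lt_trichotomy a 0 with h|h|h
  · simp [Real.sign_of_neg h]
  · simp [h]
  · simp [Real.sign_of_pos h]

/-- The optimal value of the steepest descent problem of Proposition 3 of the paper:
the maximum of `⟨w, δ⟩` over `{δ : ‖δ‖₁ ≤ ε, x + δ ∈ [0,1]^d}` equals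
`∑_{i=1}^{k−1} |w_{π_i}| z_{π_i} + |w_{π_k}| (ε − ∑_{i=1}^{k−1} z_{π_i})`
(1-based indexing in the paper corresponds to `i.val + 1` here). -/
theorem steepest_descent_optimal_value_l1_ball_inter_box
    (d : ℕ) (hd : 1 ≤ d) (w x : Fin d → ℝ)
    (hx : ∀ i, x i ∈ Set.Icc (0:ℝ) 1) (ε : ℝ) (hε : 0 < ε)
    (z : Fin d → ℝ)
    (hz : ∀ i, z i = max ((1 - x i) * Real.sign (w i)) (-(x i) * Real.sign (w i)))
    (π : Equiv.Perm (Fin d))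
    (hπ : ∀ i j : Fin d, i ≤ j → |w (π j)| ≤ |w (π i)|)
    (hfeas : ε ≤ ∑ i, z i)
    (k : ℕ) (hk1 : 1 ≤ k) (hkd : k ≤ d)
    (hk : ε ≤ ∑ i ∈ Finset.univ.filter (fun i : Fin d => i.val < k), z (π i))
    (hkmin : ∀ m : ℕ, m < k →
      ∑ i ∈ Finset.univ.filter (fun i : Fin d => i.val < m), z (π i) < ε) :
    IsGreatest
      {v : ℝ | ∃ δ : Fin d → ℝ,
        (∑ i, |δ i| ≤ ε ∧ ∀ i, x i + δ i ∈ Set.Icc (0:ℝ) 1) ∧ v = ∑ i, w i * δ i}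
      ((∑ i ∈ Finset.univ.filter (fun i : Fin d => i.val + 1 < k), |w (π i)| * z (π i)) +
        |w (π ⟨k - 1, by omega⟩)| *
          (ε - ∑ i ∈ Finset.univ.filter (fun i : Fin d => i.val + 1 < k), z (π i))) := by
  have hkk : k - 1 < d := by omega
  set kk : Fin d := ⟨k - 1, hkk⟩ with hkkdef
  set A : Finset (Fin d) := Finset.univ.filter (fun i : Fin d => i.val + 1 < k) with hA
  show IsGreatest _
      ((∑ i ∈ A, |w (π i)| * z (π i)) + |w (π kk)| * (ε - ∑ i ∈ A, z (π i)))
  -- basic facts about z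
  have hz0 : ∀ i, 0 ≤ z i := by
    intro i
    rcases lt_trichotomy (w i) 0 with h|h|h
    · have : (0:ℝ) ≤ -(x i) * Real.sign (w i) := by
        rw [Real.sign_of_neg h]; have := (hx i).1; nlinarith
      exact le_trans this (by rw [hz i]; exact le_max_right _ _)
    · rw [hz i]; simp [h]
    · have : (0:ℝ) ≤ (1 - x i) * Real.sign (w i) := by
        rw [Real.sign_of_pos h]; have := (hx i).2; nlinarith
      exact le_trans this (by rw [hz i]; exact le_max_left _ _)
  have hzpos' : ∀ j, 0 < w j → z j = 1 - x j := by
    intro j h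
    rw [hz j, Real.sign_of_pos h]
    rw [show (1 - x j) * (1:ℝ) = 1 - x j by ring, show -(x j) * (1:ℝ) = -(x j) by ring]
    exact max_eq_left (by nlinarith)
  have hzneg' : ∀ j, w j < 0 → z j = x j := by
    intro j h
    rw [hz j, Real.sign_of_neg h]
    rw [show (1 - x j) * (-1:ℝ) = x j - 1 by ring, show -(x j) * (-1:ℝ) = x j by ring]
    exact max_eq_right (by have := (hx j).1; have := (hx j).2; linarith)
  -- r
  set r : ℝ := ε - ∑ i ∈ A, z (π i) with hrdef
  have hAeq : A = Finset.univ.filter (fun i : Fin d => i.val < k - 1) := by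
    ext i; simp [hA]; omega
  have hr0 : 0 < r := by
    have := hkmin (k - 1) (by omega)
    rw [← hAeq] at this
    simp only [hrdef]; linarith
  have hkknotA : kk ∉ A := by simp [hA, hkkdef]; omega
  have hfilterk : Finset.univ.filter (fun i : Fin d => i.val < k) = insert kk A := by
    ext i
    simp [hA, hkkdef, Fin.ext_iff]
    omega
  have hrle : r ≤ z (π kk) := by
    rw [hfilterk, Finset.sum_insert hkknotA] at hk
    simp only [hrdef]; linarith
  -- the vector t
  set t : Fin d → ℝ := fun i => if i.val + 1 < k then z (π i) else if i = kk then r else 0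
    with htdef
  have ht0 : ∀ i, 0 ≤ t i := by
    intro i; simp only [htdef]
    split_ifs with h1 h2
    · exact hz0 _
    · exact hr0.le
    · exact le_refl _
  have htz : ∀ i, t i ≤ z (π i) := by
    intro i; simp only [htdef]
    split_ifs with h1 h2
    · exact le_refl _
    · rw [h2]; exact hrle
    · exact hz0 _
  have hsum_t : ∀ c : Fin d → ℝ,
      ∑ i, c i * t i = (∑ i ∈ A, c i * z (π i)) + c kk * r := by
    intro c
    have hpt : ∀ i : Fin d, c i * t i =
        (if i.val + 1 < k then c i * z (π i) else 0) + (if i = kk then c kk * r else 0) := by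
      intro i
      simp only [htdef]
      by_cases h1 : i.val + 1 < k
      · have h2 : i ≠ kk := by
          intro h; rw [h] at h1; simp [hkkdef] at h1; omega
        simp [h1, h2]
      · by_cases h2 : i = kk
        · have hnot : ¬ ((kk : ℕ) + 1 < k) := by simp [hkkdef]; omega
          rw [h2]; simp [hnot]
        · simp [h1, h2]
    rw [Finset.sum_congr rfl (fun i _ => hpt i), Finset.sum_add_distrib]
    congr 1
    · rw [← Finset.sum_filter]
    · rw [Finset.sum_ite_eq' Finset.univ kk (fun _ => c kk * r)]
      simp
  have htsum : ∑ i, t i = ε := by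
    have := hsum_t (fun _ => 1)
    simp only [one_mul] at this
    rw [this]; simp only [hrdef]; ring
  constructor
  · -- membership: the optimal δ
    refine ⟨fun j => Real.sign (w j) * t (π.symm j), ⟨?_, ?_⟩, ?_⟩
    · calc ∑ j, |Real.sign (w j) * t (π.symm j)|
          ≤ ∑ j, t (π.symm j) := by
            refine Finset.sum_le_sum fun j _ => ?_
            rw [abs_mul, abs_of_nonneg (ht0 _)]
            nlinarith [my_abs_sign_le (w j), ht0 (π.symm j), abs_nonneg (Real.sign (w j))]
        _ = ∑ i, t i := Equiv.sum_comp π.symm t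
        _ = ε := htsum
    · intro j
      have hc0 : 0 ≤ t (π.symm j) := ht0 _
      have hcz : t (π.symm j) ≤ z j := by
        have := htz (π.symm j); rwa [Equiv.apply_symm_apply] at this
      have hx0 := (hx j).1
      have hx1 := (hx j).2
      simp only [Set.mem_Icc]
      rcases lt_trichotomy (w j) 0 with h|h|h
      · simp only [Real.sign_of_neg h]
        have := hzneg' j h
        constructor <;> nlinarith
      · simp [h, hx0, hx1]
      · simp only [Real.sign_of_pos h]
        have := hzpos' j h
        constructor <;> nlinarith
    · have hpt : ∀ j, w j * (Real.sign (w j) * t (π.symm j)) = |w j| * t (π.symm j) := by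
        intro j; rw [← my_sign_mul_self (w j)]; ring
      calc (∑ i ∈ A, |w (π i)| * z (π i)) + |w (π kk)| * r
          = ∑ i, |w (π i)| * t i := (hsum_t (fun i => |w (π i)|)).symm
        _ = ∑ j, |w (π (π.symm j))| * t (π.symm j) :=
            (Equiv.sum_comp π.symm (fun i => |w (π i)| * t i)).symm
        _ = ∑ j, w j * (Real.sign (w j) * t (π.symm j)) := by
            refine Finset.sum_congr rfl fun j _ => ?_
            rw [Equiv.apply_symm_apply, hpt j]
  · -- upper bound
    rintro v ⟨δ, ⟨hδ1, hδ2⟩, rfl⟩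
    set u : Fin d → ℝ := fun i => min (z (π i)) |δ (π i)| with hudef
    have hu0 : ∀ i, 0 ≤ u i := fun i => le_min (hz0 _) (abs_nonneg _)
    have husum : ∑ i, u i ≤ ε := by
      calc ∑ i, u i ≤ ∑ i, |δ (π i)| := Finset.sum_le_sum fun i _ => min_le_right _ _
        _ = ∑ j, |δ j| := Equiv.sum_comp π (fun j => |δ j|)
        _ ≤ ε := hδ1
    have key : ∀ j, w j * δ j ≤ |w j| * min (z j) |δ j| := by
      intro j
      have h1 : w j * δ j ≤ |w j| * |δ j| := by
        calc w j * δ j ≤ |w j * δ j| := le_abs_self _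
          _ = |w j| * |δ j| := abs_mul _ _
      rcases lt_trichotomy (w j) 0 with h|h|h
      · have hzj := hzneg' j h
        have hb := (hδ2 j).1
        have h2 : w j * δ j ≤ |w j| * z j := by
          rw [abs_of_neg h, hzj]; nlinarith
        rcases min_cases (z j) |δ j| with ⟨he, _⟩ | ⟨he, _⟩ <;> rw [he]
        · exact h2
        · exact h1
      · simp [h]
      · have hzj := hzpos' j h
        have hb := (hδ2 j).2
        have h2 : w j * δ j ≤ |w j| * z j := by
          rw [abs_of_pos h, hzj]; nlinarith
        rcases min_cases (z j) |δ j| with ⟨he, _⟩ | ⟨he, _⟩ <;> rw [he]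
        · exact h2
        · exact h1
    have hpoint : ∀ i : Fin d, |w (π i)| * u i ≤
        |w (π kk)| * u i + (|w (π i)| - |w (π kk)|) * t i := by
      intro i
      by_cases h1 : i.val + 1 < k
      · have hle : i ≤ kk := by
          rw [Fin.le_def]; simp [hkkdef]; omega
        have hba : |w (π kk)| ≤ |w (π i)| := hπ i kk hle
        have hti : t i = z (π i) := by simp only [htdef]; rw [if_pos h1]
        have hut : u i ≤ t i := by rw [hti]; exact min_le_left _ _
        nlinarith
      · by_cases h2 : i = kk
        · rw [h2]; nlinarith [ht0 kk]
        · have hti : t i = 0 := by simp only [htdef]; rw [if_neg h1, if_neg h2]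
          have hle : kk ≤ i := by
            rw [Fin.le_def]; simp [hkkdef]; omega
          have hab : |w (π i)| ≤ |w (π kk)| := hπ kk i hle
          rw [hti]
          nlinarith [hu0 i]
    have hwkk0 : 0 ≤ |w (π kk)| := abs_nonneg _
    calc ∑ j, w j * δ j
        = ∑ i, w (π i) * δ (π i) := (Equiv.sum_comp π (fun j => w j * δ j)).symm
      _ ≤ ∑ i, |w (π i)| * u i := Finset.sum_le_sum fun i _ => key (π i)
      _ ≤ ∑ i, (|w (π kk)| * u i + (|w (π i)| - |w (π kk)|) * t i) :=
          Finset.sum_le_sum fun i _ => hpoint i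
      _ = |w (π kk)| * (∑ i, u i) + ((∑ i, |w (π i)| * t i) - |w (π kk)| * (∑ i, t i)) := by
          rw [Finset.sum_add_distrib, Finset.mul_sum, Finset.mul_sum, ← Finset.sum_sub_distrib]
          congr 1
          refine Finset.sum_congr rfl fun i _ => by ring
      _ ≤ |w (π kk)| * ε + ((∑ i, |w (π i)| * t i) - |w (π kk)| * (∑ i, t i)) := by
          have := mul_le_mul_of_nonneg_left husum hwkk0
          linarith
      _ = (∑ i ∈ A, |w (π i)| * z (π i)) + |w (π kk)| * r := by
          rw [htsum, hsum_t (fun i => |w (π i)|)]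
          ring
end

section
/- Let d ≥ 1, a, γ ∈ ℝ^d with a_i ≥ 0 and γ_i ≥ 0 for all i, and ε > 0. Suppose λ* ≥ 0 satisfies either (λ* = 0 and ∑_{i=1}^d min{a_i, γ_i} ≤ ε) or ∑_{i=1}^d max{0, min{a_i − λ*, γ_i}} = ε. Then w* defined by w*_i = max{0, min{a_i − λ*, γ_i}} minimizes ∑_{i=1}^d (a_i − w_i)² over the set {w ∈ ℝ^d : 0 ≤ w_i ≤ γ_i for all i, ∑_{i=1}^d w_i ≤ ε}. -/
lemma ptwise_kkt (a γ lam v : ℝ) (hγ : 0 ≤ γ) (ha : 0 ≤ a) (hlam : 0 ≤ lam)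
    (hv0 : 0 ≤ v) (hvγ : v ≤ γ) :
    (a - max 0 (min (a - lam) γ)) * (v - max 0 (min (a - lam) γ)) ≤
      lam * (v - max 0 (min (a - lam) γ)) := by
  rcases le_total (a - lam) 0 with h | h
  · have hm : max 0 (min (a - lam) γ) = 0 :=
      max_eq_left (le_trans (min_le_left _ _) h)
    rw [hm]; nlinarith
  · rcases le_total γ (a - lam) with h2 | h2
    · have hm : max 0 (min (a - lam) γ) = γ := by
        rw [min_eq_right h2, max_eq_right hγ]
      rw [hm]; nlinarith
    · have hm : max 0 (min (a - lam) γ) = a - lam := by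
        rw [min_eq_left h2, max_eq_right h]
      rw [hm]; nlinarith

/-- The reduced box-constrained quadratic problem from the proof of Proposition 1 of the
paper: the KKT point `w*_i = max{0, min{a_i − λ*, γ_i}}` minimizes `∑ i, (a_i − w_i)²` over
`{w : 0 ≤ w_i ≤ γ_i, ∑ i, w_i ≤ ε}`. -/
theorem reduced_box_qp_kkt_minimizer
    (d : ℕ) (hd : 1 ≤ d) (a γ : Fin d → ℝ)
    (ha : ∀ i, 0 ≤ a i) (hγ : ∀ i, 0 ≤ γ i)
    (ε : ℝ) (hε : 0 < ε) (lam : ℝ) (hlam : 0 ≤ lam)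
    (hopt : (lam = 0 ∧ ∑ i, min (a i) (γ i) ≤ ε) ∨
      ∑ i, max 0 (min (a i - lam) (γ i)) = ε)
    (wstar : Fin d → ℝ) (hw : ∀ i, wstar i = max 0 (min (a i - lam) (γ i))) :
    ((∀ i, 0 ≤ wstar i ∧ wstar i ≤ γ i) ∧ ∑ i, wstar i ≤ ε) ∧
      ∀ v : Fin d → ℝ, (∀ i, 0 ≤ v i ∧ v i ≤ γ i) → (∑ i, v i ≤ ε) →
        ∑ i, (a i - wstar i)^2 ≤ ∑ i, (a i - v i)^2 := by
  have hbox : ∀ i, 0 ≤ wstar i ∧ wstar i ≤ γ i := by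
    intro i
    rw [hw i]
    exact ⟨le_max_left _ _, max_le (hγ i) (min_le_right _ _)⟩
  have hsum : ∑ i, wstar i ≤ ε := by
    rcases hopt with ⟨hl0, hs⟩ | hs
    · calc ∑ i, wstar i = ∑ i, min (a i) (γ i) := by
            apply Finset.sum_congr rfl
            intro i _
            rw [hw i, hl0, sub_zero, max_eq_right (le_min (ha i) (hγ i))]
        _ ≤ ε := hs
    · calc ∑ i, wstar i = ∑ i, max 0 (min (a i - lam) (γ i)) :=
            Finset.sum_congr rfl (fun i _ => hw i)
        _ ≤ ε := hs.le
  refine ⟨⟨hbox, hsum⟩, ?_⟩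
  intro v hv hvε
  have key : ∀ i, (a i - wstar i) * (v i - wstar i) ≤ lam * (v i - wstar i) := by
    intro i
    rw [hw i]
    exact ptwise_kkt (a i) (γ i) lam (v i) (hγ i) (ha i) hlam (hv i).1 (hv i).2
  have hsum2 : ∑ i, (a i - wstar i) * (v i - wstar i) ≤ lam * (∑ i, v i - ∑ i, wstar i) := by
    have := Finset.sum_le_sum (fun i (_ : i ∈ Finset.univ) => key i)
    calc ∑ i, (a i - wstar i) * (v i - wstar i)
        ≤ ∑ i, lam * (v i - wstar i) := this
      _ = lam * (∑ i, v i - ∑ i, wstar i) := by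
          rw [← Finset.mul_sum, Finset.sum_sub_distrib]
  have hlamterm : lam * (∑ i, v i - ∑ i, wstar i) ≤ 0 := by
    rcases hopt with ⟨hl0, _⟩ | hs
    · rw [hl0]; ring_nf; simp
    · have : ∑ i, wstar i = ε := by
        calc ∑ i, wstar i = ∑ i, max 0 (min (a i - lam) (γ i)) :=
              Finset.sum_congr rfl (fun i _ => hw i)
          _ = ε := hs
      rw [this]
      exact mul_nonpos_of_nonneg_of_nonpos hlam (by linarith)
  have expand : ∀ i, (a i - wstar i)^2 ≤
      (a i - v i)^2 + 2 * ((a i - wstar i) * (v i - wstar i)) := by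
    intro i; nlinarith [sq_nonneg (wstar i - v i)]
  calc ∑ i, (a i - wstar i)^2
      ≤ ∑ i, ((a i - v i)^2 + 2 * ((a i - wstar i) * (v i - wstar i))) :=
        Finset.sum_le_sum (fun i _ => expand i)
    _ = ∑ i, (a i - v i)^2 + 2 * ∑ i, (a i - wstar i) * (v i - wstar i) := by
        rw [Finset.sum_add_distrib, Finset.mul_sum]
    _ ≤ ∑ i, (a i - v i)^2 := by nlinarith
end

section
/- Let d ≥ 1 and 0 < ε ≤ (d−1)/2, and let Z₁,…,Z_d be independent random variables each uniformly distributed on [0,1]. Let K = min{m ∈ {1,…,d} : Z₁ + ⋯ + Z_m ≥ ε}, with K = d if Z₁ + ⋯ + Z_d < ε. Then E[K] ≥ (⌊3ε⌋ + 1)/2. -/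
/-!
Bound `E[K] ≥ ∑_{m < ⌈2ε⌉} P(K > m)` term by term. With nonnegative summands, `K > m` as soon
as `m < d` and `S_m < ε`. For `m ≤ ε` this holds almost surely, since `S_m < m` a.s. when `m ≥ 1`.
For `m < 2ε` it holds whenever `S_m ≤ m/2`, an event of probability at least `1/2` because
`Z ↦ 1 - Z` preserves the law and exchanges it with `S_m ≥ m/2`. Summing gives
`E[K] ≥ (⌊ε⌋ + ⌈2ε⌉ + 1)/2 ≥ (⌊3ε⌋ + 1)/2`. Independence enters only through the joint law of
`Z`, which is the product of the uniform laws, so all the estimates are made on the unit cube.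
-/
open MeasureTheory ProbabilityTheory

theorem measurable_nat_sInf {α : Type*} [MeasurableSpace α] {p : ℕ → α → Prop}
    (hp : ∀ m, MeasurableSet {x | p m x}) : Measurable fun x => sInf {m | p m x} := by
  classical
  -- Since `sInf ∅ = 0`, allowing every index once no index qualifies leaves the infimum unchanged.
  have hq : ∀ x, ∃ m, p m x ∨ ∀ k, ¬ p k x := fun x => by
    by_cases h : ∃ m, p m x
    · exact h.imp fun _ => Or.inl
    · exact ⟨0, Or.inr (not_exists.1 h)⟩
  have heq : (fun x => sInf {m | p m x}) = fun x => Nat.find (hq x) := by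
    funext x
    by_cases h : ∃ m, p m x
    · refine le_antisymm (Nat.sInf_le ((Nat.find_spec (hq x)).resolve_right ?_))
        (Nat.find_min' _ (Or.inl (Nat.sInf_mem h)))
      exact not_forall_not.2 h
    · rw [(Nat.find_eq_zero _).2 (Or.inr (not_exists.1 h))]
      simp [not_exists.1 h]
  have hnone : MeasurableSet {x | ∀ k, ¬ p k x} := by
    convert MeasurableSet.iInter fun k => (hp k).compl
    ext; simp
  rw [heq]
  exact measurable_find hq fun m => (hp m).union hnone

theorem Nat.floor_add_le_floor_add_ceil {x y : ℝ} (hx : 0 ≤ x) : ⌊x + y⌋₊ ≤ ⌊x⌋₊ + ⌈y⌉₊ := by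
  rw [← Nat.floor_add_natCast hx]
  exact Nat.floor_le_floor (by linarith [Nat.le_ceil y])

section TailSum

variable {α : Type*} [MeasurableSpace α] {μ : Measure α}

theorem measureReal_mono_ae [IsFiniteMeasure μ] {s t : Set α} (h : s ≤ᵐ[μ] t) :
    μ.real s ≤ μ.real t :=
  ENNReal.toReal_mono (measure_ne_top μ t) (measure_mono_ae h)

theorem sum_range_measureReal_lt_le_integral [IsFiniteMeasure μ] {K : α → ℕ} (hK : Measurable K)
    {n : ℕ} (hKn : ∀ x, K x ≤ n) (b : ℕ) :
    ∑ m ∈ Finset.range b, μ.real {x | m < K x} ≤ ∫ x, (K x : ℝ) ∂μ := by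
  have hmeas : ∀ m, MeasurableSet {x | m < K x} := fun m => hK measurableSet_Ioi
  have hint : Integrable (fun x => (K x : ℝ)) μ :=
    .of_bound (measurable_from_top.comp hK).aestronglyMeasurable n
      (.of_forall fun x => by simpa using hKn x)
  have hpointwise : ∀ x, ∑ m ∈ Finset.range b, {y | m < K y}.indicator 1 x ≤ (K x : ℝ) := by
    intro x
    simp only [Set.indicator_apply, Set.mem_ofPred_eq, Pi.one_apply, Finset.sum_boole]
    have : ((Finset.range b).filter (· < K x)).card ≤ K x := by
      simpa using Finset.card_le_card (s := (Finset.range b).filter (· < K x))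
        (t := Finset.range (K x)) fun m hm => by simp_all
    exact_mod_cast this
  calc ∑ m ∈ Finset.range b, μ.real {x | m < K x}
      = ∫ x, ∑ m ∈ Finset.range b, {y | m < K y}.indicator 1 x ∂μ := by
        rw [integral_finsetSum _ fun m _ => (integrable_const 1).indicator (hmeas m)]
        exact Finset.sum_congr rfl fun m _ => (integral_indicator_one (hmeas m)).symm
    _ ≤ ∫ x, (K x : ℝ) ∂μ :=
        integral_mono (integrable_finsetSum _ fun m _ => (integrable_const 1).indicator (hmeas m))
          hint hpointwise

end TailSum

theorem half_le_measureReal_le_half_of_measurePreserving {α : Type*} [MeasurableSpace α]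
    {μ : Measure α} [IsProbabilityMeasure μ] {σ : α → α} (hσ : MeasurePreserving σ μ μ)
    {T : α → ℝ} (hT : Measurable T) {c : ℝ} (hTσ : ∀ x, T (σ x) = c - T x) :
    1 / 2 ≤ μ.real {x | T x ≤ c / 2} := by
  have hsymm : μ.real {x | c / 2 ≤ T x} = μ.real {x | T x ≤ c / 2} := by
    have hpre : σ ⁻¹' {x | T x ≤ c / 2} = {x | c / 2 ≤ T x} := by
      ext x
      simp only [Set.mem_preimage, Set.mem_ofPred_eq, hTσ]
      constructor <;> intro h <;> linarith
    rw [← hpre]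
    exact hσ.measureReal_preimage (hT measurableSet_Iic).nullMeasurableSet
  have hcover : μ.real Set.univ ≤ μ.real ({x | T x ≤ c / 2} ∪ {x | c / 2 ≤ T x}) :=
    measureReal_mono fun x _ => le_total (T x) (c / 2)
  linarith [measureReal_union_le (μ := μ) {x | T x ≤ c / 2} {x | c / 2 ≤ T x},
    probReal_univ (μ := μ)]

instance : IsProbabilityMeasure (volume.restrict (Set.Icc (0 : ℝ) 1)) :=
  ⟨by simp⟩

theorem measurePreserving_one_sub_restrict_Icc :
    MeasurePreserving (fun x : ℝ => 1 - x) (volume.restrict (Set.Icc 0 1))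
      (volume.restrict (Set.Icc 0 1)) := by
  have h := (Measure.measurePreserving_sub_left volume (1 : ℝ)).restrict_preimage
    (measurableSet_Icc (a := 0) (b := 1))
  have hpre : (fun x : ℝ => 1 - x) ⁻¹' Set.Icc 0 1 = Set.Icc 0 1 := by
    ext x
    simp only [Set.mem_preimage, Set.mem_Icc]
    constructor <;> rintro ⟨h0, h1⟩ <;> constructor <;> linarith
  rwa [hpre] at h

noncomputable def uniformCube (ι : Type*) [Fintype ι] : Measure (ι → ℝ) :=
  Measure.pi fun _ => volume.restrict (Set.Icc 0 1)

namespace uniformCube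

variable {ι : Type*} [Fintype ι]

instance : IsProbabilityMeasure (uniformCube ι) := by
  unfold uniformCube; infer_instance

theorem ae_mem_Ico : ∀ᵐ x ∂uniformCube ι, ∀ i, x i ∈ Set.Ico (0 : ℝ) 1 := by
  refine ae_all_iff.2 fun i => ?_
  refine (measurePreserving_eval (fun _ : ι => volume.restrict (Set.Icc (0 : ℝ) 1)) i
    ).quasiMeasurePreserving.ae (p := fun y : ℝ => y ∈ Set.Ico 0 1) ?_
  rw [← restrict_Ico_eq_restrict_Icc]
  exact ae_restrict_mem measurableSet_Ico

theorem half_le_measureReal_sum_le (s : Finset ι) :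
    1 / 2 ≤ (uniformCube ι).real {x | ∑ i ∈ s, x i ≤ (s.card : ℝ) / 2} := by
  refine half_le_measureReal_le_half_of_measurePreserving (σ := fun x i => 1 - x i)
    (measurePreserving_pi _ _ fun _ => measurePreserving_one_sub_restrict_Icc)
    (Finset.measurable_sum _ fun i _ => measurable_pi_apply i) fun x => ?_
  simp [Finset.sum_sub_distrib]

end uniformCube

section FirstPassage

variable {d : ℕ}

def partialSum (x : Fin d → ℝ) (m : ℕ) : ℝ :=
  ∑ i ∈ Finset.univ.filter (fun i : Fin d => i.val < m), x i

noncomputable def firstPassageIndex (ε : ℝ) (x : Fin d → ℝ) : ℕ :=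
  if ε ≤ partialSum x d then sInf {m | 1 ≤ m ∧ m ≤ d ∧ ε ≤ partialSum x m} else d

theorem measurable_partialSum (m : ℕ) : Measurable fun x : Fin d → ℝ => partialSum x m :=
  Finset.measurable_sum _ fun i _ => measurable_pi_apply i

theorem partialSum_mono {x : Fin d → ℝ} (hx : ∀ i, 0 ≤ x i) : Monotone (partialSum x) :=
  fun _ _ hmn => Finset.sum_le_sum_of_subset_of_nonneg
    (Finset.monotone_filter_right _ fun _ _ him => lt_of_lt_of_le him hmn) fun i _ _ => hx i

theorem partialSum_lt_self {x : Fin d → ℝ} (hx : ∀ i, x i < 1) {m : ℕ} (hm : 0 < m)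
    (hmd : m ≤ d) : partialSum x m < m := by
  have hne : (Finset.univ.filter fun i : Fin d => i.val < m).Nonempty := ⟨⟨0, by omega⟩, by simpa⟩
  simpa [partialSum, Fin.card_filter_val_lt, hmd] using
    Finset.sum_lt_sum_of_nonempty hne fun i _ => hx i

theorem firstPassageIndex_le (ε : ℝ) (x : Fin d → ℝ) : firstPassageIndex ε x ≤ d := by
  unfold firstPassageIndex
  split_ifs
  · rcases Set.eq_empty_or_nonempty {m | 1 ≤ m ∧ m ≤ d ∧ ε ≤ partialSum x m} with h | h
    · simp [h]
    · exact (Nat.sInf_mem h).2.1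
  · exact le_rfl

theorem lt_firstPassageIndex {ε : ℝ} {x : Fin d → ℝ} (hx : ∀ i, 0 ≤ x i) {m : ℕ} (hmd : m < d)
    (hm : partialSum x m < ε) : m < firstPassageIndex ε x := by
  unfold firstPassageIndex
  split_ifs
  case pos hεd =>
    refine Nat.lt_of_not_le fun hle => ?_
    have hA : ε ≤ partialSum x (sInf {m | 1 ≤ m ∧ m ≤ d ∧ ε ≤ partialSum x m}) :=
      (Nat.sInf_mem (s := {m | 1 ≤ m ∧ m ≤ d ∧ ε ≤ partialSum x m})
        ⟨d, by omega, le_rfl, hεd⟩).2.2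
    linarith [partialSum_mono hx hle]
  · exact hmd

theorem measurable_firstPassageIndex (ε : ℝ) :
    Measurable (firstPassageIndex (d := d) ε) :=
  Measurable.ite (measurableSet_le measurable_const (measurable_partialSum d))
    (measurable_nat_sInf fun m => by
      simp only [Set.ofPred_and]
      exact (MeasurableSet.const _).inter <| (MeasurableSet.const _).inter <|
        measurableSet_le measurable_const (measurable_partialSum m)) measurable_const

end FirstPassage

section FirstPassageUniform

variable {d : ℕ} {ε : ℝ} {m : ℕ}

theorem one_le_measureReal_lt_firstPassageIndex (hε : 0 < ε) (hmd : m < d) (hmε : (m : ℝ) ≤ ε) :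
    1 ≤ (uniformCube (Fin d)).real {x | m < firstPassageIndex ε x} := by
  rw [← probReal_univ (μ := uniformCube (Fin d))]
  refine measureReal_mono_ae ?_
  filter_upwards [uniformCube.ae_mem_Ico] with x hx _
  refine lt_firstPassageIndex (fun i => (hx i).1) hmd ?_
  rcases Nat.eq_zero_or_pos m with rfl | hm
  · simpa [partialSum] using hε
  · exact (partialSum_lt_self (fun i => (hx i).2) hm hmd.le).trans_le hmε

theorem half_le_measureReal_lt_firstPassageIndex (hmd : m < d) (hmε : (m : ℝ) < 2 * ε) :
    1 / 2 ≤ (uniformCube (Fin d)).real {x | m < firstPassageIndex ε x} := by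
  calc (1 : ℝ) / 2 ≤ (uniformCube (Fin d)).real {x | partialSum x m ≤ (m : ℝ) / 2} := by
        simpa [partialSum, Fin.card_filter_val_lt, hmd.le] using
          uniformCube.half_le_measureReal_sum_le (Finset.univ.filter fun i : Fin d => i.val < m)
    _ ≤ _ := by
        refine measureReal_mono_ae ?_
        filter_upwards [uniformCube.ae_mem_Ico] with x hx hxm
        have hxm : partialSum x m ≤ m / 2 := hxm
        exact lt_firstPassageIndex (fun i => (hx i).1) hmd (by linarith)

theorem floor_three_mul_add_one_div_two_le_integral_firstPassageIndex (hε : 0 < ε)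
    (hεd : ε ≤ ((d : ℝ) - 1) / 2) :
    ((⌊3 * ε⌋₊ : ℝ) + 1) / 2 ≤ ∫ x, (firstPassageIndex ε x : ℝ) ∂uniformCube (Fin d) := by
  set P : ℕ → ℝ := fun m => (uniformCube (Fin d)).real {x | m < firstPassageIndex ε x}
  set a := ⌊ε⌋₊
  set b := ⌈2 * ε⌉₊
  have hab : a + 1 ≤ b := Nat.lt_ceil.2 (by linarith [Nat.floor_le hε.le])
  have hlt : ∀ m < b, (m : ℝ) < 2 * ε := fun m hm => Nat.lt_ceil.1 hm
  have hbd : ∀ m < b, m < d := fun m hm => by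
    have : (m : ℝ) < d := by linarith [hlt m hm]
    exact_mod_cast this
  have hfloor : ⌊3 * ε⌋₊ ≤ a + b := by
    have := Nat.floor_add_le_floor_add_ceil (x := ε) (y := 2 * ε) hε.le
    rwa [show ε + 2 * ε = 3 * ε by ring] at this
  calc ((⌊3 * ε⌋₊ : ℝ) + 1) / 2
      ≤ (a + 1 : ℕ) • (1 : ℝ) + (b - (a + 1) : ℕ) • (1 / 2 : ℝ) := by
        rw [nsmul_eq_mul, nsmul_eq_mul, Nat.cast_sub hab]
        push_cast
        linarith [show (⌊3 * ε⌋₊ : ℝ) ≤ a + b by exact_mod_cast hfloor]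
    _ ≤ ∑ m ∈ Finset.range (a + 1), P m + ∑ m ∈ Finset.Ico (a + 1) b, P m := by
        gcongr
        · simpa using Finset.card_nsmul_le_sum _ _ _ fun m hm =>
            one_le_measureReal_lt_firstPassageIndex hε (hbd m (by simp at hm; omega))
              ((Nat.cast_le.2 (Nat.lt_succ_iff.1 (Finset.mem_range.1 hm))).trans
                (Nat.floor_le hε.le))
        · simpa using Finset.card_nsmul_le_sum _ _ _ fun m hm =>
            half_le_measureReal_lt_firstPassageIndex (hbd m (Finset.mem_Ico.1 hm).2)
              (hlt m (Finset.mem_Ico.1 hm).2)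
    _ = ∑ m ∈ Finset.range b, P m := Finset.sum_range_add_sum_Ico _ hab
    _ ≤ ∫ x, (firstPassageIndex ε x : ℝ) ∂uniformCube (Fin d) :=
        sum_range_measureReal_lt_le_integral (measurable_firstPassageIndex ε)
          (firstPassageIndex_le ε) b

end FirstPassageUniform

theorem expected_sparsity_lower_bound_general
    (d : ℕ) (ε : ℝ) (hε : 0 < ε) (hεd : ε ≤ ((d : ℝ) - 1) / 2)
    {Ω : Type*} [MeasurableSpace Ω] (μ : Measure Ω) [IsProbabilityMeasure μ]
    (Z : Fin d → Ω → ℝ)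
    (hZindep : iIndepFun Z μ)
    (hZunif : ∀ i, Measure.map (Z i) μ = volume.restrict (Set.Icc (0:ℝ) 1))
    (S : ℕ → Ω → ℝ)
    (hS : ∀ m ω, S m ω = ∑ i ∈ Finset.univ.filter (fun i : Fin d => i.val < m), Z i ω)
    (K : Ω → ℕ)
    (hK : ∀ ω, K ω = if ε ≤ S d ω then sInf {m : ℕ | 1 ≤ m ∧ m ≤ d ∧ ε ≤ S m ω} else d) :
    ((⌊3 * ε⌋₊ : ℝ) + 1) / 2 ≤ ∫ ω, (K ω : ℝ) ∂μ := by
  have hZ : ∀ i, AEMeasurable (Z i) μ := fun i =>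
    AEMeasurable.of_map_ne_zero (by rw [hZunif i]; exact IsProbabilityMeasure.ne_zero _)
  have hK_eq : ∀ ω, K ω = firstPassageIndex ε fun i => Z i ω := fun ω => by
    simp only [hK, hS, firstPassageIndex, partialSum]
  have hlaw : μ.map (fun ω i => Z i ω) = uniformCube (Fin d) := by
    rw [hZindep.map_fun_eq_pi_map hZ, uniformCube]
    simp only [hZunif]
  have hκ : AEStronglyMeasurable (fun x => (firstPassageIndex ε x : ℝ)) (uniformCube (Fin d)) :=
    (measurable_from_top.comp (measurable_firstPassageIndex ε)).aestronglyMeasurable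
  calc ((⌊3 * ε⌋₊ : ℝ) + 1) / 2
      ≤ ∫ x, (firstPassageIndex ε x : ℝ) ∂uniformCube (Fin d) :=
        floor_three_mul_add_one_div_two_le_integral_firstPassageIndex hε hεd
    _ = ∫ ω, (K ω : ℝ) ∂μ := by
        rw [← hlaw, integral_map (aemeasurable_pi_lambda _ hZ) (hlaw ▸ hκ)]
        simp only [hK_eq]

/-- Lower bound of Proposition 4 of the paper: for i.i.d. uniforms `Z₁,…,Z_d` on `[0,1]`,
`0 < ε ≤ (d−1)/2`, and `K = min{m ∈ {1,…,d} : Z₁ + ⋯ + Z_m ≥ ε}` (with `K = d` when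
`Z₁ + ⋯ + Z_d < ε`), one has `E[K] ≥ (⌊3ε⌋ + 1)/2`. -/
theorem expected_sparsity_lower_bound
    (d : ℕ) (hd : 1 ≤ d) (ε : ℝ) (hε : 0 < ε) (hεd : ε ≤ ((d : ℝ) - 1) / 2)
    {Ω : Type*} [MeasurableSpace Ω] (μ : Measure Ω) [IsProbabilityMeasure μ]
    (Z : Fin d → Ω → ℝ) (hZmeas : ∀ i, Measurable (Z i))
    (hZindep : iIndepFun Z μ)
    (hZunif : ∀ i, Measure.map (Z i) μ = volume.restrict (Set.Icc (0:ℝ) 1))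
    (S : ℕ → Ω → ℝ)
    (hS : ∀ m ω, S m ω = ∑ i ∈ Finset.univ.filter (fun i : Fin d => i.val < m), Z i ω)
    (K : Ω → ℕ)
    (hK : ∀ ω, K ω = if ε ≤ S d ω then sInf {m : ℕ | 1 ≤ m ∧ m ≤ d ∧ ε ≤ S m ω} else d) :
    ((⌊3 * ε⌋₊ : ℝ) + 1) / 2 ≤ ∫ ω, (K ω : ℝ) ∂μ :=
  expected_sparsity_lower_bound_general d ε hε hεd μ Z hZindep hZunif S hS K hK
end
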